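/- arXiv:2206.12526 — 18 statements merged into one kernel-verified Lean document; each statement's English description precedes it below -/
import Mathlib

section
/- Let X be a set and Y a nonempty subset of X. The semigroup T(X,Y) (all maps X → X with range contained in Y, under the multiplication α·β := β ∘ α, i.e. first apply α then β) possesses a two-sided identity element (is a monoid) if and only if Y = X or Y is a singleton. -/
/-! When `Y` has two points `a ≠ b`, a right identity `ε` of `T(X,Y)` must fix every `x`: the map
sending `x` to `a` and everything else to `b` lies in `T(X,Y)` and would otherwise distinguish
`x` from `ε x`. So `ε = id`, and `range ε ⊆ Y` forces `Y = X`. Conversely `id` is the identity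
of `T(X,X)`, and `T(X,{y})` consists of the single constant map `y`. -/

theorem eq_id_of_forall_comp_eq_self {X : Type*} {Y : Set X} (hY : Y.Nontrivial) {ε : X → X}
    (h : ∀ α : X → X, Set.range α ⊆ Y → α ∘ ε = α) : ε = id := by
  classical
  obtain ⟨a, ha, b, hb, hab⟩ := hY
  funext x
  by_contra hx
  let α : X → X := fun z => if z = x then a else b
  have hα : Set.range α ⊆ Y := by
    rintro _ ⟨z, rfl⟩
    dsimp only [α]
    split_ifs <;> assumption
  have hαx : α (ε x) = α x := congrFun (h α hα) x
  exact hx (by simpa [α, hab.symm] using hαx)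

theorem eq_univ_or_eq_singleton_of_range_subset {X : Type*} {Y : Set X} (hY : Y.Subsingleton)
    {f : X → X} (hf : Set.range f ⊆ Y) : Y = Set.univ ∨ ∃ y, Y = {y} := by
  rcases hY.eq_empty_or_singleton with rfl | hsingleton
  · have : IsEmpty X := Set.range_eq_empty_iff.mp (Set.subset_empty_iff.mp hf)
    exact Or.inl (Subsingleton.elim _ _)
  · exact Or.inr hsingleton

theorem TXY_monoid_iff_general {X : Type*} (Y : Set X) :
    (∃ ε : X → X, Set.range ε ⊆ Y ∧
      ∀ α : X → X, Set.range α ⊆ Y → α ∘ ε = α ∧ ε ∘ α = α) ↔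
    Y = Set.univ ∨ ∃ y : X, Y = {y} := by
  constructor
  · rintro ⟨ε, hε, hid⟩
    rcases Y.subsingleton_or_nontrivial with hY | hY
    · exact eq_univ_or_eq_singleton_of_range_subset hY hε
    · obtain rfl := eq_id_of_forall_comp_eq_self hY fun α hα => (hid α hα).1
      exact Or.inl (Set.univ_subset_iff.mp (Set.range_id ▸ hε))
  · rintro (rfl | ⟨y, rfl⟩)
    · exact ⟨id, Set.subset_univ _, fun _ _ => ⟨rfl, rfl⟩⟩
    · refine ⟨Function.const X y, Set.range_subset_singleton.mpr rfl, fun α hα => ?_⟩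
      obtain rfl := Set.range_subset_singleton.mp hα
      exact ⟨rfl, rfl⟩

/-- Let `X` be a set and `Y` a nonempty subset of `X`. The semigroup
`T(X,Y)` of all maps `X → X` with range contained in `Y`, under the multiplication
`α·β := β ∘ α`, possesses a two-sided identity element (is a monoid) if and only if
`Y = X` or `Y` is a singleton. -/
theorem TXY_monoid_iff {X : Type*} (Y : Set X) (hY : Y.Nonempty) :
    (∃ ε : X → X, Set.range ε ⊆ Y ∧
      ∀ α : X → X, Set.range α ⊆ Y → α ∘ ε = α ∧ ε ∘ α = α) ↔
    Y = Set.univ ∨ ∃ y : X, Y = {y} :=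
  TXY_monoid_iff_general Y
end

section
/- Let X be a set and Y a nonempty subset of X. There exists a set Z such that the semigroup T(X,Y) is isomorphic (as a semigroup) to the full transformation monoid of all maps Z → Z (under α·β := β ∘ α) if and only if Y = X or Y is a singleton. -/
/-!
A semigroup anti-isomorphic to the monoid `Z → Z` has a left identity `e`, i.e. `a ∘ e = a` for
every `a ∈ T(X,Y)`. If `Y` has two distinct points, maps in `T(X,Y)` separate any `x` from `e x`,
so `e = id`, and `id ∈ T(X,Y)` forces `Y = X`; otherwise `Y` is a singleton (it cannot be empty
unless `X` is, since `e` maps into it). Conversely `T(X,X)` is `X → X` itself and `T(X,{y})` is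
trivial.
-/

universe u

/-- The semigroup `T(X,Y)` of all maps `X → X` with range contained in `Y`. -/
def TXY {X : Type u} (Y : Set X) : Type u := {α : X → X // Set.range α ⊆ Y}

/-- Multiplication on `T(X,Y)`: `α·β := β ∘ α` (first apply `α`, then `β`). -/
def Tmul {X : Type u} {Y : Set X} (a b : TXY Y) : TXY Y :=
  ⟨b.1 ∘ a.1, (Set.range_comp_subset_range a.1 b.1).trans b.2⟩

theorem mul_symm_id_eq_of_equiv_antihom {S Z : Type*} (mul : S → S → S) (φ : S ≃ (Z → Z))
    (hφ : ∀ a b, φ (mul a b) = φ b ∘ φ a) (a : S) : mul (φ.symm id) a = a :=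
  φ.injective (by rw [hφ, φ.apply_symm_apply, Function.comp_id])

namespace TXY

variable {X : Type u} {Y : Set X}

theorem val_eq_id_of_forall_Tmul_eq (hY : Y.Nontrivial) (e : TXY Y)
    (he : ∀ a : TXY Y, Tmul e a = a) : e.1 = id := by
  classical
  obtain ⟨y₁, hy₁, y₂, hy₂, hne⟩ := hY
  funext x
  by_contra hex
  change e.1 x ≠ x at hex
  let a : TXY Y := ⟨fun z => if z = x then y₁ else y₂, Set.range_subset_iff.mpr fun z => by
    split_ifs <;> assumption⟩
  have hax : a.1 (e.1 x) = a.1 x := congrFun (congrArg Subtype.val (he a)) x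
  simp only [a, hex, if_true, if_false] at hax
  exact hne hax.symm

theorem eq_univ_or_eq_singleton_of_forall_Tmul_eq (e : TXY Y)
    (he : ∀ a : TXY Y, Tmul e a = a) : Y = Set.univ ∨ ∃ y : X, Y = {y} := by
  by_cases hY : Y.Nontrivial
  · left
    have hid : Set.range (id : X → X) ⊆ Y := val_eq_id_of_forall_Tmul_eq hY e he ▸ e.2
    exact Set.eq_univ_of_forall fun x => hid ⟨x, rfl⟩
  · obtain rfl | hsingle := (Set.not_nontrivial_iff.mp hY).eq_empty_or_singleton
    · exact Or.inl (Set.eq_univ_of_forall fun x => absurd (e.2 ⟨x, rfl⟩) (Set.notMem_empty _))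
    · exact Or.inr hsingle

def univEquiv (X : Type u) : TXY (Set.univ : Set X) ≃ (X → X) where
  toFun a := a.1
  invFun f := ⟨f, Set.subset_univ _⟩
  left_inv _ := rfl
  right_inv _ := rfl

instance (y : X) : Unique (TXY ({y} : Set X)) where
  default := ⟨fun _ => y, Set.range_subset_iff.mpr fun _ => rfl⟩
  uniq a := Subtype.ext (funext fun z => a.2 ⟨z, rfl⟩)

end TXY

theorem TXY_iso_full_transformation_iff_general {X : Type u} (Y : Set X) :
    (∃ (Z : Type u) (φ : TXY Y ≃ (Z → Z)),
      ∀ a b : TXY Y, φ (Tmul a b) = φ b ∘ φ a) ↔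
    Y = Set.univ ∨ ∃ y : X, Y = {y} := by
  constructor
  · rintro ⟨Z, φ, hφ⟩
    exact TXY.eq_univ_or_eq_singleton_of_forall_Tmul_eq (φ.symm id)
      (mul_symm_id_eq_of_equiv_antihom Tmul φ hφ)
  · rintro (rfl | ⟨y, rfl⟩)
    · exact ⟨X, TXY.univEquiv X, fun _ _ => rfl⟩
    · exact ⟨PUnit, Equiv.ofUnique _ _, fun _ _ => Subsingleton.elim _ _⟩

/-- Let `X` be a set and `Y` a nonempty subset of `X`. There exists a set
`Z` such that `T(X,Y)` is isomorphic as a semigroup to the full transformation monoid of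
all maps `Z → Z` (under `α·β := β ∘ α`) if and only if `Y = X` or `Y` is a singleton. -/
theorem TXY_iso_full_transformation_iff {X : Type u} (Y : Set X) (hY : Y.Nonempty) :
    (∃ (Z : Type u) (φ : TXY Y ≃ (Z → Z)),
      ∀ a b : TXY Y, φ (Tmul a b) = φ b ∘ φ a) ↔
    Y = Set.univ ∨ ∃ y : X, Y = {y} :=
  TXY_iso_full_transformation_iff_general Y
end

section
/- Let X be a set and Y a nonempty subset of X, and let Q = {α ∈ T(X,Y) : α(X) ⊆ α(Y)}. Then: (1) Q is a right ideal of T(X,Y), i.e. for all α ∈ Q and β ∈ T(X,Y), α·β ∈ Q; (2) every element of Q is regular in T(X,Y), i.e. for each α ∈ Q there exists γ ∈ T(X,Y) with α = α·γ·α; and (3) every regular element of T(X,Y) lies in Q. Hence Q is exactly the set of regular elements of T(X,Y). -/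
/-!
If `α(X) ⊆ α(Y)`, choosing for each point of `α(Y)` a preimage in `Y` (and sending every other
point anywhere into `Y`, e.g. by `α` itself) gives `γ ∈ T(X,Y)` with `α ∘ γ ∘ α = α`.
Conversely, `α = α ∘ γ ∘ α` writes each `α x` as the image of `γ (α x) ∈ Y`.
-/

section

open Set

variable {X Z W : Type*} {Y : Set X}

theorem range_comp_subset_image_comp {α : X → Z} (β : Z → W) (h : range α ⊆ α '' Y) :
    range (β ∘ α) ⊆ (β ∘ α) '' Y := by
  rw [range_comp, image_comp]
  exact image_mono h

theorem exists_comp_comp_eq_of_range_subset_image {α : X → Z} {g : Z → X} (hg : range g ⊆ Y)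
    (h : range α ⊆ α '' Y) : ∃ γ : Z → X, range γ ⊆ Y ∧ α ∘ γ ∘ α = α := by
  classical
  refine ⟨fun z => if hz : ∃ y ∈ Y, α y = z then hz.choose else g z, ?_, ?_⟩
  · rintro _ ⟨z, rfl⟩
    by_cases hz : ∃ y ∈ Y, α y = z
    · simpa only [dif_pos hz] using hz.choose_spec.1
    · simpa only [dif_neg hz] using hg ⟨z, rfl⟩
  · funext x
    have hx : ∃ y ∈ Y, α y = α x := h ⟨x, rfl⟩
    simpa only [Function.comp, dif_pos hx] using hx.choose_spec.2

theorem range_subset_image_of_comp_comp_eq {α : X → Z} {γ : Z → X} (hγ : range γ ⊆ Y)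
    (h : α ∘ γ ∘ α = α) : range α ⊆ α '' Y := by
  rintro _ ⟨x, rfl⟩
  exact ⟨γ (α x), hγ ⟨α x, rfl⟩, congrFun h x⟩

end

theorem Q_right_ideal_and_regular_general {X : Type*} (Y : Set X) :
    (∀ α : X → X, Set.range α ⊆ Y → Set.range α ⊆ α '' Y →
      ∀ β : X → X, Set.range β ⊆ Y →
        Set.range (β ∘ α) ⊆ Y ∧ Set.range (β ∘ α) ⊆ (β ∘ α) '' Y) ∧
    (∀ α : X → X, Set.range α ⊆ Y → Set.range α ⊆ α '' Y →
      ∃ γ : X → X, Set.range γ ⊆ Y ∧ α ∘ γ ∘ α = α) ∧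
    (∀ α : X → X, Set.range α ⊆ Y →
      (∃ γ : X → X, Set.range γ ⊆ Y ∧ α ∘ γ ∘ α = α) → Set.range α ⊆ α '' Y) :=
  ⟨fun α _ hαQ β hβ =>
      ⟨(Set.range_comp_subset_range α β).trans hβ, range_comp_subset_image_comp β hαQ⟩,
    fun _ hα hαQ => exists_comp_comp_eq_of_range_subset_image hα hαQ,
    fun _ _ ⟨_, hγ, h⟩ => range_subset_image_of_comp_comp_eq hγ h⟩

/-- Let `X` be a set, `Y` a nonempty subset of `X`, and
`Q = {α ∈ T(X,Y) : α(X) ⊆ α(Y)}`.  Then (1) `Q` is a right ideal of `T(X,Y)`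
(multiplication `α·β := β ∘ α`); (2) every element of `Q` is regular in `T(X,Y)`;
(3) every regular element of `T(X,Y)` lies in `Q`. -/
theorem Q_right_ideal_and_regular {X : Type*} (Y : Set X) (hY : Y.Nonempty) :
    (∀ α : X → X, Set.range α ⊆ Y → Set.range α ⊆ α '' Y →
      ∀ β : X → X, Set.range β ⊆ Y →
        Set.range (β ∘ α) ⊆ Y ∧ Set.range (β ∘ α) ⊆ (β ∘ α) '' Y) ∧
    (∀ α : X → X, Set.range α ⊆ Y → Set.range α ⊆ α '' Y →
      ∃ γ : X → X, Set.range γ ⊆ Y ∧ α ∘ γ ∘ α = α) ∧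
    (∀ α : X → X, Set.range α ⊆ Y →
      (∃ γ : X → X, Set.range γ ⊆ Y ∧ α ∘ γ ∘ α = α) → Set.range α ⊆ α '' Y) :=
  Q_right_ideal_and_regular_general Y
end

section
/- Let X be a set and Y a nonempty proper subset of X (Y ⊊ X). Then the semigroup T(X,Y) is not a regular semigroup if and only if Y contains at least two elements. -/
/-!
If `Y` has at most one point, every `α ∈ T(X,Y)` is constant, so `α ∘ α ∘ α = α` and `α`
is its own witness of regularity. If `Y` contains `a ≠ b` and `x₀ ∉ Y`,
the map sending `x₀` to `a` and everything else to `b` is not regular: any `γ ∈ T(X,Y)`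
sends `α x₀` into `Y`, where `α` takes only the value `b`, so `α (γ (α x₀)) = b ≠ α x₀`.
-/

namespace TXY

variable {X : Type*} {Y : Set X} {α : X → X}

/-- `α` is a regular element of `T(X,Y)`; with `α·β := β ∘ α`, `α = α·γ·α` reads
`α ∘ γ ∘ α = α`. -/
def IsRegular (Y : Set X) (α : X → X) : Prop :=
  ∃ γ : X → X, Set.range γ ⊆ Y ∧ α ∘ γ ∘ α = α

theorem isRegular_of_subsingleton (hY : Y.Subsingleton) (hα : Set.range α ⊆ Y) :
    IsRegular Y α :=
  ⟨α, hα, funext fun x => hY (hα ⟨_, rfl⟩) (hα ⟨x, rfl⟩)⟩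

theorem not_isRegular_of_apply_notMem_image {x₀ : X} (h : α x₀ ∉ α '' Y) :
    ¬ IsRegular Y α := by
  rintro ⟨γ, hγ, hαγα⟩
  exact h ⟨γ (α x₀), hγ ⟨_, rfl⟩, congrFun hαγα x₀⟩

theorem exists_not_isRegular (hYX : Y ≠ Set.univ) (hY : Y.Nontrivial) :
    ∃ α : X → X, Set.range α ⊆ Y ∧ ¬ IsRegular Y α := by
  classical
  obtain ⟨x₀, hx₀⟩ := (Set.ne_univ_iff_exists_notMem Y).mp hYX
  obtain ⟨a, ha, b, hb, hab⟩ := hY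
  refine ⟨Function.update (fun _ => b) x₀ a, ?_,
    not_isRegular_of_apply_notMem_image (x₀ := x₀) ?_⟩
  · rintro _ ⟨x, rfl⟩
    by_cases hx : x = x₀ <;> simp [Function.update, hx, ha, hb]
  · rintro ⟨y, hy, hya⟩
    have hyx₀ : y ≠ x₀ := fun h => hx₀ (h ▸ hy)
    simp only [Function.update_self, Function.update_of_ne hyx₀] at hya
    exact hab hya.symm

end TXY

theorem TXY_not_regular_iff_general {X : Type*} (Y : Set X)
    (hYX : Y ≠ Set.univ) :
    (¬ ∀ α : X → X, Set.range α ⊆ Y →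
        ∃ γ : X → X, Set.range γ ⊆ Y ∧ α ∘ γ ∘ α = α) ↔
    Y.Nontrivial := by
  constructor
  · intro hnot
    by_contra hY
    exact hnot fun α hα => TXY.isRegular_of_subsingleton (Set.not_nontrivial_iff.mp hY) hα
  · intro hY hall
    obtain ⟨α, hα, hα_irr⟩ := TXY.exists_not_isRegular hYX hY
    exact hα_irr (hall α hα)

/-- Let `X` be a set and `Y` a nonempty proper subset of `X`. Then the
semigroup `T(X,Y)` (maps `X → X` with range in `Y`, multiplication `α·β := β ∘ α`) is not
regular if and only if `Y` contains at least two elements. -/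
theorem TXY_not_regular_iff {X : Type*} (Y : Set X) (hY : Y.Nonempty)
    (hYX : Y ≠ Set.univ) :
    (¬ ∀ α : X → X, Set.range α ⊆ Y →
        ∃ γ : X → X, Set.range γ ⊆ Y ∧ α ∘ γ ∘ α = α) ↔
    Y.Nontrivial :=
  TXY_not_regular_iff_general Y hYX
end

section
/- Let X be a set and Y a proper subset of X with at least two elements, and let Q = {α ∈ T(X,Y) : α(X) ⊆ α(Y)}. Then: (1) for every α ∈ T(X,Y) with α ∉ Q there exists α' ∈ Q with α'(X) = α(X); and (2) for every β ∈ Q whose image β(X) has more than one element, there exists β' ∈ T(X,Y) with β' ∉ Q and β'(X) = β(X). -/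
/-!
For (1), let `α'` fix `α(X)` pointwise and agree with `α` elsewhere: it has the same image, and
every point of that image lies in `Y` and is its own preimage. For (2), pick `a ≠ b` in `β(X)`
and `p ∉ Y`; send `p` to `a`, and redirect every other point that `β` sends to `a` to `b`.
The image is unchanged, since `β(X) ⊆ β(Y)` and `p ∉ Y`, but now `a` is hit only from `p`,
so not from `Y`.
-/

open Set Function

theorem exists_range_eq_forall_apply_eq_self {α : Type*} (f : α → α) :
    ∃ g : α → α, range g = range f ∧ ∀ y ∈ range f, g y = y := by
  classical
  refine ⟨fun x => if x ∈ range f then x else f x, ?_, fun y hy => if_pos hy⟩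
  apply Subset.antisymm
  · rintro _ ⟨x, rfl⟩
    dsimp only
    split_ifs with hx
    exacts [hx, mem_range_self x]
  · intro y hy
    exact ⟨y, if_pos hy⟩

theorem exists_range_eq_notMem_image {α β : Type*} {f : α → β} {s : Set α} {p : α}
    (hp : p ∉ s) (hf : range f ⊆ f '' s) {a b : β} (ha : a ∈ range f) (hb : b ∈ range f)
    (hab : a ≠ b) : ∃ g : α → β, range g = range f ∧ a ∉ g '' s := by
  classical
  set g := update (fun x => if f x = a then b else f x) p a
  have hg_ne : ∀ x ≠ p, g x ≠ a := fun x hx => by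
    by_cases h : f x = a <;> simp [g, hx, h, hab.symm]
  refine ⟨g, Subset.antisymm ?_ fun y hy => ?_, ?_⟩
  · rintro _ ⟨x, rfl⟩
    by_cases hxp : x = p
    · simpa [g, hxp] using ha
    · by_cases h : f x = a <;> simp [g, hxp, h, hb]
  · by_cases hya : y = a
    · exact ⟨p, by simp [g, hya]⟩
    · obtain ⟨x, hxs, rfl⟩ := hf hy
      have hxp : x ≠ p := ne_of_mem_of_not_mem hxs hp
      exact ⟨x, by simp [g, hxp, hya]⟩
  · rintro ⟨x, hxs, hx⟩
    exact hg_ne x (ne_of_mem_of_not_mem hxs hp) hx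

theorem reg_nonreg_same_image_general {X : Type*} (Y : Set X)
    (hYX : Y ≠ Set.univ) :
    (∀ α : X → X, Set.range α ⊆ Y → ¬ Set.range α ⊆ α '' Y →
      ∃ α' : X → X, Set.range α' ⊆ Y ∧ Set.range α' ⊆ α' '' Y ∧
        Set.range α' = Set.range α) ∧
    (∀ β : X → X, Set.range β ⊆ Y → Set.range β ⊆ β '' Y →
      (Set.range β).Nontrivial →
      ∃ β' : X → X, Set.range β' ⊆ Y ∧ ¬ Set.range β' ⊆ β' '' Y ∧
        Set.range β' = Set.range β) := by
  constructor
  · intro α hαY _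
    obtain ⟨α', hrange, hfix⟩ := exists_range_eq_forall_apply_eq_self α
    refine ⟨α', hrange ▸ hαY, fun y hy => ?_, hrange⟩
    rw [hrange] at hy
    exact ⟨y, hαY hy, hfix y hy⟩
  · intro β hβY hβQ ⟨a, ha, b, hb, hab⟩
    obtain ⟨p, hp⟩ := (ne_univ_iff_exists_notMem Y).1 hYX
    obtain ⟨β', hrange, haβ'⟩ := exists_range_eq_notMem_image hp hβQ ha hb hab
    exact ⟨β', hrange ▸ hβY, fun h => haβ' (h (hrange ▸ ha)), hrange⟩

/-- Let `X` be a set and `Y` a proper subset of `X` with at least two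
elements, and `Q = {α ∈ T(X,Y) : α(X) ⊆ α(Y)}`. Then (1) for every `α ∈ T(X,Y) \ Q` there
is `α' ∈ Q` with the same image; (2) for every `β ∈ Q` whose image has more than one
element there is `β' ∈ T(X,Y) \ Q` with the same image. -/
theorem reg_nonreg_same_image {X : Type*} (Y : Set X) (hY : Y.Nontrivial)
    (hYX : Y ≠ Set.univ) :
    (∀ α : X → X, Set.range α ⊆ Y → ¬ Set.range α ⊆ α '' Y →
      ∃ α' : X → X, Set.range α' ⊆ Y ∧ Set.range α' ⊆ α' '' Y ∧
        Set.range α' = Set.range α) ∧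
    (∀ β : X → X, Set.range β ⊆ Y → Set.range β ⊆ β '' Y →
      (Set.range β).Nontrivial →
      ∃ β' : X → X, Set.range β' ⊆ Y ∧ ¬ Set.range β' ⊆ β' '' Y ∧
        Set.range β' = Set.range β) :=
  reg_nonreg_same_image_general Y hYX
end

section
/- Let X be a set and Y a nonempty subset of X. For α ∈ T(X,Y) the following are equivalent: (1) α is regular in T(X,Y), i.e. α = α·γ·α for some γ ∈ T(X,Y); (2) there exists an idempotent η ∈ T(X,Y) (η·η = η) with α = η·α and the cardinality of η(X) equal to the cardinality of α(X); (3) there exists γ ∈ T(X,Y) with α = γ·α. -/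
/-!
If `α ∘ γ ∘ α = α`, then `α` undoes `γ` on `range α`, so `η := γ ∘ α` is an idempotent with
`α ∘ η = α`, and `γ` maps `range α` bijectively onto `range η`. Conversely, if `α ∘ γ = α`, then
`γ ∘ invFun α` is an inner inverse of `α`, since `invFun α` is a right inverse of `α` on `range α`.
-/

open Cardinal Function Set

universe u

section InnerInverse

variable {X Z : Type*} {α : X → Z} {γ : Z → X}

theorem leftInvOn_range_of_comp_comp_eq (h : α ∘ γ ∘ α = α) : LeftInvOn α γ (range α) := by
  rintro _ ⟨x, rfl⟩
  exact congrFun h x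

theorem comp_comp_self_of_comp_comp_eq (h : α ∘ γ ∘ α = α) : (γ ∘ α) ∘ (γ ∘ α) = γ ∘ α :=
  congrArg (γ ∘ ·) h

end InnerInverse

theorem mk_range_comp_of_comp_comp_eq {X Z : Type u} {α : X → Z} {γ : Z → X}
    (h : α ∘ γ ∘ α = α) : #(range (γ ∘ α)) = #(range α) := by
  rw [range_comp]
  exact mk_image_eq_of_injOn γ _ (leftInvOn_range_of_comp_comp_eq h).injOn

theorem comp_comp_invFun_comp_eq {X Z : Type*} [Nonempty X] {α : X → Z} {γ : X → X}
    (h : α ∘ γ = α) : α ∘ (γ ∘ invFun α) ∘ α = α := by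
  funext x
  change (α ∘ γ) (invFun α (α x)) = α x
  rw [h]
  exact apply_invFun_apply

theorem regular_iff_left_identity_general {X : Type*} (Y : Set X) (hY : Y.Nonempty)
    (α : X → X) :
    ((∃ γ : X → X, Set.range γ ⊆ Y ∧ α ∘ γ ∘ α = α) ↔
      (∃ η : X → X, Set.range η ⊆ Y ∧ η ∘ η = η ∧ α ∘ η = α ∧
        Cardinal.mk (Set.range η) = Cardinal.mk (Set.range α))) ∧
    ((∃ γ : X → X, Set.range γ ⊆ Y ∧ α ∘ γ ∘ α = α) ↔
      (∃ γ : X → X, Set.range γ ⊆ Y ∧ α ∘ γ = α)) := by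
  have regular_to_idempotent : (∃ γ : X → X, range γ ⊆ Y ∧ α ∘ γ ∘ α = α) →
      ∃ η : X → X, range η ⊆ Y ∧ η ∘ η = η ∧ α ∘ η = α ∧ #(range η) = #(range α) := by
    rintro ⟨γ, hγY, h⟩
    exact ⟨γ ∘ α, (range_comp_subset_range α γ).trans hγY, comp_comp_self_of_comp_comp_eq h, h,
      mk_range_comp_of_comp_comp_eq h⟩
  have idempotent_to_left_identity : (∃ η : X → X, range η ⊆ Y ∧ η ∘ η = η ∧ α ∘ η = α ∧
      #(range η) = #(range α)) → ∃ γ : X → X, range γ ⊆ Y ∧ α ∘ γ = α :=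
    fun ⟨η, hηY, _, h, _⟩ => ⟨η, hηY, h⟩
  have left_identity_to_regular : (∃ γ : X → X, range γ ⊆ Y ∧ α ∘ γ = α) →
      ∃ γ : X → X, range γ ⊆ Y ∧ α ∘ γ ∘ α = α := by
    rintro ⟨γ, hγY, h⟩
    have : Nonempty X := ⟨hY.some⟩
    exact ⟨γ ∘ invFun α, (range_comp_subset_range _ γ).trans hγY, comp_comp_invFun_comp_eq h⟩
  exact ⟨⟨regular_to_idempotent, left_identity_to_regular ∘ idempotent_to_left_identity⟩,
    ⟨idempotent_to_left_identity ∘ regular_to_idempotent, left_identity_to_regular⟩⟩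

/-- Let `X` be a set, `Y` a nonempty subset of `X` and `α ∈ T(X,Y)`
(multiplication `α·β := β ∘ α`). The following are equivalent: (1) `α` is regular;
(2) `α = η·α` for some idempotent `η ∈ T(X,Y)` with `|η(X)| = |α(X)|`;
(3) `α = γ·α` for some `γ ∈ T(X,Y)`. -/
theorem regular_iff_left_identity {X : Type*} (Y : Set X) (hY : Y.Nonempty)
    (α : X → X) (hα : Set.range α ⊆ Y) :
    ((∃ γ : X → X, Set.range γ ⊆ Y ∧ α ∘ γ ∘ α = α) ↔
      (∃ η : X → X, Set.range η ⊆ Y ∧ η ∘ η = η ∧ α ∘ η = α ∧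
        Cardinal.mk (Set.range η) = Cardinal.mk (Set.range α))) ∧
    ((∃ γ : X → X, Set.range γ ⊆ Y ∧ α ∘ γ ∘ α = α) ↔
      (∃ γ : X → X, Set.range γ ⊆ Y ∧ α ∘ γ = α)) :=
  regular_iff_left_identity_general Y hY α
end

section
/- Let X be a set and Y a proper subset of X with at least two elements. For α, β ∈ T(X,Y): there exists μ ∈ T(X,Y) with α = β·μ (i.e. α = μ ∘ β) if and only if ker β ⊆ ker α (i.e. for all a, b ∈ X, β(a) = β(b) implies α(a) = α(b)). Consequently, α and β are Green's 𝓡-related in T(X,Y) if and only if ker α = ker β. -/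
/-!
If `α = μ ∘ β` then `β a = β b` forces `α a = α b`. Conversely, when `ker β ⊆ ker α` the map
`β(x) ↦ α(x)` is well defined on the image of `β`; extending it by `α` itself off that image gives
a `μ` whose values all lie in the image of `α`, hence in `Y`. Applying this in both directions
characterises `𝓡` by equality of kernels.
-/

open Function Set

theorem exists_range_subset_comp_eq_iff_factorsThrough {X Z : Type*} {Y : Set Z}
    {α : X → Z} {β : X → X} (hα : range α ⊆ Y) :
    (∃ μ : X → Z, range μ ⊆ Y ∧ α = μ ∘ β) ↔ α.FactorsThrough β := by
  constructor
  · rintro ⟨μ, -, rfl⟩ a b hab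
    simp only [comp_apply, hab]
  · intro hker
    refine ⟨extend β α α, ?_, (hker.extend_comp α).symm⟩
    calc range (extend β α α) ⊆ range α ∪ α '' (range β)ᶜ := range_extend_subset β α α
      _ ⊆ range α := union_subset subset_rfl (image_subset_range α _)
      _ ⊆ Y := hα

theorem greenR_iff_ker_eq {X : Type*} {Y : Set X} {α β : X → X}
    (hα : range α ⊆ Y) (hβ : range β ⊆ Y) :
    (α = β ∨ ∃ μ μ' : X → X, range μ ⊆ Y ∧ range μ' ⊆ Y ∧ α = μ ∘ β ∧ β = μ' ∘ α) ↔
      ∀ a b : X, α a = α b ↔ β a = β b := by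
  constructor
  · rintro (rfl | ⟨μ, μ', -, -, hαβ, hβα⟩) a b
    · rfl
    · exact ⟨fun h ↦ by rw [hβα, comp_apply, comp_apply, h],
        fun h ↦ by rw [hαβ, comp_apply, comp_apply, h]⟩
  · intro hker
    obtain ⟨μ, hμ, hαβ⟩ :=
      (exists_range_subset_comp_eq_iff_factorsThrough hα).2 fun a b ↦ (hker a b).2
    obtain ⟨μ', hμ', hβα⟩ :=
      (exists_range_subset_comp_eq_iff_factorsThrough hβ).2 fun a b ↦ (hker a b).1
    exact Or.inr ⟨μ, μ', hμ, hμ', hαβ, hβα⟩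

theorem GreenR_in_TXY_general {X : Type*} (Y : Set X) :
    (∀ α β : X → X, Set.range α ⊆ Y → Set.range β ⊆ Y →
      ((∃ μ : X → X, Set.range μ ⊆ Y ∧ α = μ ∘ β) ↔
        ∀ a b : X, β a = β b → α a = α b)) ∧
    (∀ α β : X → X, Set.range α ⊆ Y → Set.range β ⊆ Y →
      ((α = β ∨ ∃ μ μ' : X → X, Set.range μ ⊆ Y ∧ Set.range μ' ⊆ Y ∧
          α = μ ∘ β ∧ β = μ' ∘ α) ↔
        ∀ a b : X, α a = α b ↔ β a = β b)) :=
  ⟨fun _ _ hα _ ↦ exists_range_subset_comp_eq_iff_factorsThrough hα,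
    fun _ _ hα hβ ↦ greenR_iff_ker_eq hα hβ⟩

/-- Let `X` be a set and `Y` a proper subset of `X` with at least two
elements. For `α, β ∈ T(X,Y)` (multiplication `α·β := β ∘ α`): `α = β·μ` for some
`μ ∈ T(X,Y)` iff `ker β ⊆ ker α`. Consequently `α 𝓡 β` in `T(X,Y)` iff `ker α = ker β`. -/
theorem GreenR_in_TXY {X : Type*} (Y : Set X) (hY : Y.Nontrivial)
    (hYX : Y ≠ Set.univ) :
    (∀ α β : X → X, Set.range α ⊆ Y → Set.range β ⊆ Y →
      ((∃ μ : X → X, Set.range μ ⊆ Y ∧ α = μ ∘ β) ↔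
        ∀ a b : X, β a = β b → α a = α b)) ∧
    (∀ α β : X → X, Set.range α ⊆ Y → Set.range β ⊆ Y →
      ((α = β ∨ ∃ μ μ' : X → X, Set.range μ ⊆ Y ∧ Set.range μ' ⊆ Y ∧
          α = μ ∘ β ∧ β = μ' ∘ α) ↔
        ∀ a b : X, α a = α b ↔ β a = β b)) :=
  GreenR_in_TXY_general Y
end

section
/- Let X be a set and Y a proper subset of X with at least two elements, and let Q = {α ∈ T(X,Y) : α(X) ⊆ α(Y)}. If α ∈ T(X,Y) and β ∈ Q, then there exists λ ∈ T(X,Y) with α = λ·β (i.e. α = β ∘ λ) if and only if α(X) ⊆ β(X). Consequently, for α, β ∈ T(X,Y), α and β are Green's 𝓛-related in T(X,Y) if and only if α = β, or (α(X) = β(X) and α, β ∈ Q). -/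
/-!
Factoring `α = β ∘ λ` with `range λ ⊆ Y` amounts to choosing, for every `x`, a preimage of
`α x` under `β` inside `Y`; this is possible exactly when `range α ⊆ β '' Y`. For `β ∈ Q` this
set is `range β`, and for the `𝓛`-relation the two mutual factorisations give equal ranges,
each contained in the image of `Y` under the other map, hence under itself.
-/

namespace Function

variable {X : Type*} {Y : Set X} {α β : X → X}

theorem range_subset_image_of_eq_comp {l : X → X} (hl : Set.range l ⊆ Y) (h : α = β ∘ l) :
    Set.range α ⊆ β '' Y := by
  rw [h, Set.range_comp]
  exact Set.image_mono hl

theorem exists_eq_comp_of_range_subset_image (h : Set.range α ⊆ β '' Y) :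
    ∃ l : X → X, Set.range l ⊆ Y ∧ α = β ∘ l := by
  choose l hlY hβl using fun x => h ⟨x, rfl⟩
  exact ⟨l, Set.range_subset_iff.2 hlY, funext fun x => (hβl x).symm⟩

theorem exists_eq_comp_iff_range_subset (hβ : Set.range β ⊆ β '' Y) :
    (∃ l : X → X, Set.range l ⊆ Y ∧ α = β ∘ l) ↔ Set.range α ⊆ Set.range β :=
  ⟨fun ⟨l, _, h⟩ => h ▸ Set.range_comp_subset_range l β,
    fun h => exists_eq_comp_of_range_subset_image (h.trans hβ)⟩

theorem exists_mutual_eq_comp_iff :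
    (∃ l l' : X → X, Set.range l ⊆ Y ∧ Set.range l' ⊆ Y ∧ α = β ∘ l ∧ β = α ∘ l') ↔
      Set.range α = Set.range β ∧ Set.range α ⊆ α '' Y ∧ Set.range β ⊆ β '' Y := by
  constructor
  · rintro ⟨l, l', hl, hl', hα, hβ⟩
    have hαβ := range_subset_image_of_eq_comp hl hα
    have hβα := range_subset_image_of_eq_comp hl' hβ
    have hrange : Set.range α = Set.range β :=
      (hαβ.trans (Set.image_subset_range β Y)).antisymm (hβα.trans (Set.image_subset_range α Y))
    exact ⟨hrange, hrange ▸ hβα, hrange ▸ hαβ⟩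
  · rintro ⟨hrange, hα, hβ⟩
    obtain ⟨l, hl, hαl⟩ := exists_eq_comp_of_range_subset_image (hrange.le.trans hβ)
    obtain ⟨l', hl', hβl'⟩ := exists_eq_comp_of_range_subset_image (hrange.ge.trans hα)
    exact ⟨l, l', hl, hl', hαl, hβl'⟩

end Function

theorem GreenL_in_TXY_general {X : Type*} (Y : Set X) :
    (∀ α β : X → X, Set.range α ⊆ Y → Set.range β ⊆ Y → Set.range β ⊆ β '' Y →
      ((∃ l : X → X, Set.range l ⊆ Y ∧ α = β ∘ l) ↔
        Set.range α ⊆ Set.range β)) ∧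
    (∀ α β : X → X, Set.range α ⊆ Y → Set.range β ⊆ Y →
      ((α = β ∨ ∃ l l' : X → X, Set.range l ⊆ Y ∧ Set.range l' ⊆ Y ∧
          α = β ∘ l ∧ β = α ∘ l') ↔
        (α = β ∨ (Set.range α = Set.range β ∧
          Set.range α ⊆ α '' Y ∧ Set.range β ⊆ β '' Y)))) :=
  ⟨fun _ _ _ _ hβ => Function.exists_eq_comp_iff_range_subset hβ,
    fun _ _ _ _ => or_congr_right Function.exists_mutual_eq_comp_iff⟩

/-- Let `X` be a set, `Y` a proper subset of `X` with at least two
elements, and `Q = {α ∈ T(X,Y) : α(X) ⊆ α(Y)}`. If `α ∈ T(X,Y)` and `β ∈ Q`, then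
`α = λ·β` for some `λ ∈ T(X,Y)` iff `α(X) ⊆ β(X)`. Consequently `α 𝓛 β` in `T(X,Y)` iff
`α = β`, or (`α(X) = β(X)` and `α, β ∈ Q`). -/
theorem GreenL_in_TXY {X : Type*} (Y : Set X) (hY : Y.Nontrivial)
    (hYX : Y ≠ Set.univ) :
    (∀ α β : X → X, Set.range α ⊆ Y → Set.range β ⊆ Y → Set.range β ⊆ β '' Y →
      ((∃ l : X → X, Set.range l ⊆ Y ∧ α = β ∘ l) ↔
        Set.range α ⊆ Set.range β)) ∧
    (∀ α β : X → X, Set.range α ⊆ Y → Set.range β ⊆ Y →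
      ((α = β ∨ ∃ l l' : X → X, Set.range l ⊆ Y ∧ Set.range l' ⊆ Y ∧
          α = β ∘ l ∧ β = α ∘ l') ↔
        (α = β ∨ (Set.range α = Set.range β ∧
          Set.range α ⊆ α '' Y ∧ Set.range β ⊆ β '' Y)))) :=
  GreenL_in_TXY_general Y
end

section
/- Let X be a set and Y a proper subset of X with at least two elements, and let Q = {α ∈ T(X,Y) : α(X) ⊆ α(Y)}. For α, β ∈ T(X,Y), α and β are Green's 𝓓-related in T(X,Y) (i.e. there exists γ ∈ T(X,Y) with α 𝓡 γ and γ 𝓛 β) if and only if ker α = ker β, or (the cardinality of α(X) equals the cardinality of β(X) and α, β ∈ Q). -/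
/-!
In `T(X,Y)` two maps are `𝓡`-related exactly when they have the same kernel: if `ker γ ⊆ ker α`
then `α` factors as `μ ∘ γ`, and `μ` can be extended off `γ(X)` by `α` itself so that it takes
values in `Y`. Two maps are `𝓛`-related exactly when they are equal or `γ(X) ⊆ β(Y)` and
`β(X) ⊆ γ(Y)`, i.e. `γ(X) = β(X)` with `γ, β ∈ Q`. Membership in `Q` only depends on the kernel,
so `α 𝓡 γ 𝓛 β` with `γ ≠ β` gives `α, β ∈ Q` and `|α(X)| = |γ(X)| = |β(X)|`. Conversely, a
bijection `e : α(X) → β(X)` yields the intermediate map `γ = e ∘ α`.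
-/

open Set Function Cardinal

namespace Function.FactorsThrough

variable {X Z : Type*}

theorem exists_comp_eq {Y : Set Z} {f : X → Z} {g : X → X} (h : f.FactorsThrough g)
    (hf : range f ⊆ Y) : ∃ μ : X → Z, range μ ⊆ Y ∧ f = μ ∘ g :=
  ⟨extend g f f,
    (range_extend_subset g f f).trans (union_subset hf ((image_subset_range f _).trans hf)),
    (h.extend_comp f).symm⟩

theorem range_subset_image {Y : Set X} {f g : X → Z} (h : g.FactorsThrough f)
    (hf : range f ⊆ f '' Y) : range g ⊆ g '' Y := by
  rintro _ ⟨x, rfl⟩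
  obtain ⟨y, hy, hyx⟩ := hf (mem_range_self x)
  exact ⟨y, hy, h hyx⟩

end Function.FactorsThrough

section Ranges

variable {ι X Z : Type*}

theorem exists_comp_eq_iff_range_subset_image {Y : Set X} {γ : ι → Z} {β : X → Z} :
    (∃ l : ι → X, range l ⊆ Y ∧ γ = β ∘ l) ↔ range γ ⊆ β '' Y := by
  constructor
  · rintro ⟨l, hl, rfl⟩
    exact range_comp β l ▸ image_mono hl
  · intro h
    choose l hlY hl using fun x => h (mem_range_self x)
    exact ⟨l, range_subset_iff.2 hlY, funext fun x => (hl x).symm⟩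

theorem range_subset_image_and_range_subset_image_iff {Y : Set X} {γ β : X → Z} :
    range γ ⊆ β '' Y ∧ range β ⊆ γ '' Y ↔
      range γ = range β ∧ range γ ⊆ γ '' Y ∧ range β ⊆ β '' Y := by
  constructor
  · rintro ⟨hγβ, hβγ⟩
    have hrange : range γ = range β :=
      (hγβ.trans (image_subset_range _ _)).antisymm (hβγ.trans (image_subset_range _ _))
    exact ⟨hrange, hrange.subset.trans hβγ, hrange.symm.subset.trans hγβ⟩
  · rintro ⟨hrange, hγ, hβ⟩
    exact ⟨hrange.subset.trans hβ, hrange.symm.subset.trans hγ⟩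

theorem Cardinal.mk_range_eq_of_ker_eq {α γ : X → Z} (h : ∀ a b, α a = α b ↔ γ a = γ b) :
    #(range α) = #(range γ) :=
  mk_congr <| (Setoid.quotientKerEquivRange α).symm.trans <|
    (Quotient.congrRight h).trans (Setoid.quotientKerEquivRange γ)

theorem exists_ker_eq_and_range_eq_of_mk_range_eq {α β : X → Z}
    (h : #(range α) = #(range β)) :
    ∃ γ : X → Z, (∀ a b, α a = α b ↔ γ a = γ b) ∧ range γ = range β := by
  obtain ⟨e⟩ := Cardinal.eq.1 h
  refine ⟨Subtype.val ∘ e ∘ rangeFactorization α, fun a b => ?_, ?_⟩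
  · simp only [comp_apply, Subtype.coe_inj, e.apply_eq_iff_eq, rangeFactorization, Subtype.mk.injEq]
  · rw [range_comp,
      (e.surjective.comp rangeFactorization_surjective).range_eq, image_univ, Subtype.range_coe]

end Ranges

section Green

variable {X : Type*}

/-- Green's `𝓡` on `T(X,Y)`: `α = γ·μ` and `γ = α·μ'`, where `α·μ = μ ∘ α`. -/
def GreenR (Y : Set X) (α γ : X → X) : Prop :=
  α = γ ∨ ∃ μ μ' : X → X, range μ ⊆ Y ∧ range μ' ⊆ Y ∧ α = μ ∘ γ ∧ γ = μ' ∘ α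

/-- Green's `𝓛` on `T(X,Y)`: `γ = l·β` and `β = l'·γ`, where `l·β = β ∘ l`. -/
def GreenL (Y : Set X) (γ β : X → X) : Prop :=
  γ = β ∨ ∃ l l' : X → X, range l ⊆ Y ∧ range l' ⊆ Y ∧ γ = β ∘ l ∧ β = γ ∘ l'

theorem greenR_iff {Y : Set X} {α γ : X → X} (hα : range α ⊆ Y) (hγ : range γ ⊆ Y) :
    GreenR Y α γ ↔ ∀ a b, α a = α b ↔ γ a = γ b := by
  constructor
  · rintro (rfl | ⟨μ, μ', -, -, hαγ, hγα⟩) a b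
    · rfl
    · constructor
      · intro h
        rw [hγα]
        exact congrArg μ' h
      · intro h
        rw [hαγ]
        exact congrArg μ h
  · intro h
    obtain ⟨μ, hμ, hαγ⟩ := FactorsThrough.exists_comp_eq (fun a b => (h a b).2) hα
    obtain ⟨μ', hμ', hγα⟩ := FactorsThrough.exists_comp_eq (fun a b => (h a b).1) hγ
    exact Or.inr ⟨μ, μ', hμ, hμ', hαγ, hγα⟩

theorem greenL_iff {Y : Set X} {γ β : X → X} :
    GreenL Y γ β ↔ γ = β ∨ range γ ⊆ β '' Y ∧ range β ⊆ γ '' Y := by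
  refine or_congr_right ⟨?_, ?_⟩
  · rintro ⟨l, l', hl, hl', hγβ, hβγ⟩
    exact ⟨exists_comp_eq_iff_range_subset_image.1 ⟨l, hl, hγβ⟩,
      exists_comp_eq_iff_range_subset_image.1 ⟨l', hl', hβγ⟩⟩
  · rintro ⟨hγβ, hβγ⟩
    obtain ⟨l, hl, hγβ⟩ := exists_comp_eq_iff_range_subset_image.2 hγβ
    obtain ⟨l', hl', hβγ⟩ := exists_comp_eq_iff_range_subset_image.2 hβγ
    exact ⟨l, l', hl, hl', hγβ, hβγ⟩

end Green

theorem GreenD_in_TXY_general {X : Type*} (Y : Set X) (α β : X → X)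
    (hα : Set.range α ⊆ Y) (hβ : Set.range β ⊆ Y) :
    (∃ γ : X → X, Set.range γ ⊆ Y ∧
      (α = γ ∨ ∃ μ μ' : X → X, Set.range μ ⊆ Y ∧ Set.range μ' ⊆ Y ∧
        α = μ ∘ γ ∧ γ = μ' ∘ α) ∧
      (γ = β ∨ ∃ l l' : X → X, Set.range l ⊆ Y ∧ Set.range l' ⊆ Y ∧
        γ = β ∘ l ∧ β = γ ∘ l')) ↔
    ((∀ a b : X, α a = α b ↔ β a = β b) ∨
      (Cardinal.mk (Set.range α) = Cardinal.mk (Set.range β) ∧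
        Set.range α ⊆ α '' Y ∧ Set.range β ⊆ β '' Y)) := by
  change (∃ γ, range γ ⊆ Y ∧ GreenR Y α γ ∧ GreenL Y γ β) ↔ _
  constructor
  · rintro ⟨γ, hγ, hR, hL⟩
    rw [greenR_iff hα hγ] at hR
    rcases greenL_iff.1 hL with rfl | hL
    · exact Or.inl hR
    obtain ⟨hrange, hγQ, hβQ⟩ := range_subset_image_and_range_subset_image_iff.1 hL
    refine Or.inr ⟨hrange ▸ Cardinal.mk_range_eq_of_ker_eq hR, ?_, hβQ⟩
    exact FactorsThrough.range_subset_image (fun _ _ h => (hR _ _).2 h) hγQ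
  · rintro (hker | ⟨hcard, hαQ, hβQ⟩)
    · exact ⟨β, hβ, (greenR_iff hα hβ).2 hker, Or.inl rfl⟩
    obtain ⟨γ, hker, hrange⟩ := exists_ker_eq_and_range_eq_of_mk_range_eq hcard
    have hγ : range γ ⊆ Y := hrange.subset.trans hβ
    refine ⟨γ, hγ, (greenR_iff hα hγ).2 hker, greenL_iff.2 (Or.inr ?_)⟩
    exact range_subset_image_and_range_subset_image_iff.2
      ⟨hrange, FactorsThrough.range_subset_image (fun _ _ h => (hker _ _).1 h) hαQ, hβQ⟩

/-- Let `X` be a set, `Y` a proper subset of `X` with at least two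
elements, and `Q = {α ∈ T(X,Y) : α(X) ⊆ α(Y)}` (multiplication `α·β := β ∘ α`).
Then `α 𝓓 β` in `T(X,Y)` (there is `γ ∈ T(X,Y)` with `α 𝓡 γ` and `γ 𝓛 β`) iff
`ker α = ker β`, or (`|α(X)| = |β(X)|` and `α, β ∈ Q`). -/
theorem GreenD_in_TXY {X : Type*} (Y : Set X) (hY : Y.Nontrivial)
    (hYX : Y ≠ Set.univ) (α β : X → X)
    (hα : Set.range α ⊆ Y) (hβ : Set.range β ⊆ Y) :
    (∃ γ : X → X, Set.range γ ⊆ Y ∧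
      (α = γ ∨ ∃ μ μ' : X → X, Set.range μ ⊆ Y ∧ Set.range μ' ⊆ Y ∧
        α = μ ∘ γ ∧ γ = μ' ∘ α) ∧
      (γ = β ∨ ∃ l l' : X → X, Set.range l ⊆ Y ∧ Set.range l' ⊆ Y ∧
        γ = β ∘ l ∧ β = γ ∘ l')) ↔
    ((∀ a b : X, α a = α b ↔ β a = β b) ∨
      (Cardinal.mk (Set.range α) = Cardinal.mk (Set.range β) ∧
        Set.range α ⊆ α '' Y ∧ Set.range β ⊆ β '' Y)) :=
  GreenD_in_TXY_general Y α β hα hβ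
end

section
/- Let X be a set and Y a proper subset of X with at least two elements. For α, β ∈ T(X,Y): there exist λ ∈ T(X,Y) and μ ∈ T(X,Y) ∪ {id} with α = λ·β·μ (i.e. α = μ ∘ β ∘ λ, with μ possibly the identity map) if and only if the cardinality of α(X) is at most the cardinality of β(Y). Consequently, α and β are Green's 𝓙-related in T(X,Y) if and only if ker α = ker β, or the four cardinalities |α(X)|, |α(Y)|, |β(Y)|, |β(X)| are all equal. -/
/-!
An injection `range α ↪ β '' Y` yields `l` with values in `Y` such that `β ∘ l` has the kernel of
`α`; then `α = μ ∘ β ∘ l`, where `μ` is extended off `range (β ∘ l)` by a constant of `Y`.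
Conversely `range (μ ∘ β ∘ l) ⊆ μ '' (β '' Y)` when `l` maps into `Y`.
For `𝓙`: if both left factors are the identity, the kernels of `α` and `β` coincide. Otherwise one of
`#(range α) ≤ #(β '' Y)`, `#(range β) ≤ #(α '' Y)` closes the inequalities `#(α '' Y) ≤ #(range α)`,
`#(range β) ≤ #(range α)`, `#(β '' Y) ≤ #(α '' Y)`, valid for any factorisation, and their mirror
images into a cycle.
-/

open Cardinal Function Set

universe u

section

variable {α β γ δ : Type u}

theorem mk_range_comp_le_mk_range (l : α → β) (g : β → γ) (μ : γ → δ) :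
    #(range (μ ∘ g ∘ l)) ≤ #(range g) := by
  rw [range_comp]
  exact mk_image_le.trans (mk_le_mk_of_subset (range_comp_subset_range l g))

theorem mk_range_comp_le_mk_image {l : α → β} {s : Set β} (hl : range l ⊆ s) (g : β → γ)
    (μ : γ → δ) : #(range (μ ∘ g ∘ l)) ≤ #(g '' s) := by
  rw [range_comp, range_comp]
  exact mk_image_le.trans (mk_le_mk_of_subset (image_mono hl))

theorem mk_image_comp_le_mk_image {l : β → β} {s : Set β} (hl : range l ⊆ s ∨ l = id)
    (g : β → γ) (μ : γ → δ) : #((μ ∘ g ∘ l) '' s) ≤ #(g '' s) := by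
  rcases hl with hl | rfl
  · exact (mk_le_mk_of_subset (image_subset_range _ s)).trans (mk_range_comp_le_mk_image hl g μ)
  · rw [comp_id, image_comp]
    exact mk_image_le

theorem exists_range_subset_comp_eq {f : α → γ} {g : α → β} {t : Set γ} (ht : t.Nonempty)
    (hf : range f ⊆ t) (hfg : f.FactorsThrough g) : ∃ μ : β → γ, range μ ⊆ t ∧ f = μ ∘ g := by
  obtain ⟨c, hc⟩ := ht
  refine ⟨extend g f fun _ => c, (range_extend_subset _ _ _).trans (union_subset hf ?_),
    (hfg.extend_comp _).symm⟩
  rintro _ ⟨_, -, rfl⟩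
  exact hc

theorem exists_range_subset_factorsThrough_comp {f : α → γ} {g : β → δ} {s : Set β}
    (h : #(range f) ≤ #(g '' s)) : ∃ l : α → β, range l ⊆ s ∧ f.FactorsThrough (g ∘ l) := by
  obtain ⟨e⟩ := h
  choose l hls hl using fun a => (e (rangeFactorization f a)).2
  refine ⟨l, range_subset_iff.2 hls, fun a b hab => ?_⟩
  exact congrArg Subtype.val (e.injective (Subtype.ext ((hl a).symm.trans (hab.trans (hl b)))))

theorem exists_comp_comp_eq_of_mk_range_le {f : α → γ} {g : β → δ} {s : Set β} {t : Set γ}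
    (ht : t.Nonempty) (hf : range f ⊆ t) (h : #(range f) ≤ #(g '' s)) :
    ∃ (l : α → β) (μ : δ → γ), range l ⊆ s ∧ range μ ⊆ t ∧ f = μ ∘ g ∘ l := by
  obtain ⟨l, hl, hfl⟩ := exists_range_subset_factorsThrough_comp h
  obtain ⟨μ, hμ, hfac⟩ := exists_range_subset_comp_eq ht hf hfl
  exact ⟨l, μ, hl, hμ, hfac⟩

theorem mk_range_eq_of_eq_comp_of_eq_comp {f g l μ l' μ' : α → α} {s : Set α}
    (hl : range l ⊆ s) (hl' : range l' ⊆ s ∨ l' = id) (h : f = μ ∘ g ∘ l)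
    (h' : g = μ' ∘ f ∘ l') :
    #(range f) = #(f '' s) ∧ #(f '' s) = #(g '' s) ∧ #(g '' s) = #(range g) := by
  have hfg : #(range f) ≤ #(g '' s) := by rw [h]; exact mk_range_comp_le_mk_image hl g μ
  have hgf : #(g '' s) ≤ #(f '' s) := by rw [h']; exact mk_image_comp_le_mk_image hl' f μ'
  have hgf' : #(range g) ≤ #(range f) := by rw [h']; exact mk_range_comp_le_mk_range l' f μ'
  have hf : #(f '' s) ≤ #(range f) := mk_le_mk_of_subset (image_subset_range f s)
  have hg : #(g '' s) ≤ #(range g) := mk_le_mk_of_subset (image_subset_range g s)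
  exact ⟨le_antisymm (hfg.trans hgf) hf, le_antisymm (hf.trans hfg) hgf,
    le_antisymm hg (hgf'.trans hfg)⟩

end

theorem GreenJ_in_TXY_general {X : Type*} (Y : Set X) (hY : Y.Nontrivial) :
    (∀ α β : X → X, Set.range α ⊆ Y → Set.range β ⊆ Y →
      ((∃ l μ : X → X, Set.range l ⊆ Y ∧ (Set.range μ ⊆ Y ∨ μ = id) ∧
          α = μ ∘ β ∘ l) ↔
        Cardinal.mk (Set.range α) ≤ Cardinal.mk (β '' Y))) ∧
    (∀ α β : X → X, Set.range α ⊆ Y → Set.range β ⊆ Y →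
      ((∃ l μ l' μ' : X → X,
          (Set.range l ⊆ Y ∨ l = id) ∧ (Set.range μ ⊆ Y ∨ μ = id) ∧
          (Set.range l' ⊆ Y ∨ l' = id) ∧ (Set.range μ' ⊆ Y ∨ μ' = id) ∧
          α = μ ∘ β ∘ l ∧ β = μ' ∘ α ∘ l') ↔
        ((∀ a b : X, α a = α b ↔ β a = β b) ∨
          (Cardinal.mk (Set.range α) = Cardinal.mk (α '' Y) ∧
            Cardinal.mk (α '' Y) = Cardinal.mk (β '' Y) ∧
            Cardinal.mk (β '' Y) = Cardinal.mk (Set.range β))))) := by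
  refine ⟨fun α β hα _ => ⟨?_, fun h => ?_⟩, fun α β hα hβ => ⟨?_, ?_⟩⟩
  · rintro ⟨l, μ, hl, -, rfl⟩
    exact mk_range_comp_le_mk_image hl β μ
  · obtain ⟨l, μ, hl, hμ, hfac⟩ := exists_comp_comp_eq_of_mk_range_le hY.nonempty hα h
    exact ⟨l, μ, hl, .inl hμ, hfac⟩
  · rintro ⟨l, μ, l', μ', hl, -, hl', -, h, h'⟩
    rcases hl with hl | rfl
    · exact .inr (mk_range_eq_of_eq_comp_of_eq_comp hl hl' h h')
    rcases hl' with hl' | rfl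
    · obtain ⟨e₁, e₂, e₃⟩ := mk_range_eq_of_eq_comp_of_eq_comp hl' (.inr rfl) h' h
      exact .inr ⟨e₃.symm, e₂.symm, e₁.symm⟩
    · refine .inl fun a b => ⟨fun hab => ?_, fun hab => ?_⟩
      · rw [h']; exact congrArg μ' hab
      · rw [h]; exact congrArg μ hab
  · rintro (hker | ⟨e₁, e₂, e₃⟩)
    · obtain ⟨μ, hμ, hfac⟩ := exists_range_subset_comp_eq hY.nonempty hα fun a b => (hker a b).2
      obtain ⟨μ', hμ', hfac'⟩ := exists_range_subset_comp_eq hY.nonempty hβ fun a b => (hker a b).1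
      exact ⟨id, μ, id, μ', .inr rfl, .inl hμ, .inr rfl, .inl hμ', hfac, hfac'⟩
    · obtain ⟨l, μ, hl, hμ, hfac⟩ :=
        exists_comp_comp_eq_of_mk_range_le hY.nonempty hα (e₁.trans e₂).le
      obtain ⟨l', μ', hl', hμ', hfac'⟩ :=
        exists_comp_comp_eq_of_mk_range_le hY.nonempty hβ (e₃.symm.trans e₂.symm).le
      exact ⟨l, μ, l', μ', .inl hl, .inl hμ, .inl hl', .inl hμ', hfac, hfac'⟩

/-- Let `X` be a set and `Y` a proper subset of `X` with at least two
elements (multiplication on `T(X,Y)` is `α·β := β ∘ α`). For `α, β ∈ T(X,Y)`: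
`α = λ·β·μ` with `λ ∈ T(X,Y)` and `μ ∈ T(X,Y) ∪ {id}` iff `|α(X)| ≤ |β(Y)|`.
Consequently `α 𝓙 β` iff `ker α = ker β` or `|α(X)| = |α(Y)| = |β(Y)| = |β(X)|`. -/
theorem GreenJ_in_TXY {X : Type*} (Y : Set X) (hY : Y.Nontrivial)
    (hYX : Y ≠ Set.univ) :
    (∀ α β : X → X, Set.range α ⊆ Y → Set.range β ⊆ Y →
      ((∃ l μ : X → X, Set.range l ⊆ Y ∧ (Set.range μ ⊆ Y ∨ μ = id) ∧
          α = μ ∘ β ∘ l) ↔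
        Cardinal.mk (Set.range α) ≤ Cardinal.mk (β '' Y))) ∧
    (∀ α β : X → X, Set.range α ⊆ Y → Set.range β ⊆ Y →
      ((∃ l μ l' μ' : X → X,
          (Set.range l ⊆ Y ∨ l = id) ∧ (Set.range μ ⊆ Y ∨ μ = id) ∧
          (Set.range l' ⊆ Y ∨ l' = id) ∧ (Set.range μ' ⊆ Y ∨ μ' = id) ∧
          α = μ ∘ β ∘ l ∧ β = μ' ∘ α ∘ l') ↔
        ((∀ a b : X, α a = α b ↔ β a = β b) ∨
          (Cardinal.mk (Set.range α) = Cardinal.mk (α '' Y) ∧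
            Cardinal.mk (α '' Y) = Cardinal.mk (β '' Y) ∧
            Cardinal.mk (β '' Y) = Cardinal.mk (Set.range β))))) :=
  GreenJ_in_TXY_general Y hY
end

section
/- Let X be a set and Y a proper subset of X with at least two elements, and let Q = {α ∈ T(X,Y) : α(X) ⊆ α(Y)}. For α, β ∈ Q: there exist λ, μ ∈ Q with α = λ·β·μ (i.e. α = μ ∘ β ∘ λ) if and only if the cardinality of α(X) is at most the cardinality of β(X). Consequently, α and β are Green's 𝓙-related in the semigroup Q if and only if |α(X)| = |β(X)|. -/
/-! The bound `|α(X)| ≤ |β(X)|` for `α = μ ∘ β ∘ l` holds since `α(X) ⊆ μ(β(X))`. Conversely, given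
an injection `θ : α(X) → β(X)`, let `l` send `x` to a preimage in `Y` of `θ (α x)` under `β`, which
exists because `β(X) ⊆ β(Y)`, and let `μ` undo `θ` on its image and agree with `α` elsewhere. -/

/-- `α` belongs to `Q = {α ∈ T(X,Y) : α(X) ⊆ α(Y)}`. -/
def inQ {X : Type*} (Y : Set X) (α : X → X) : Prop :=
  Set.range α ⊆ Y ∧ Set.range α ⊆ α '' Y

open Set Cardinal Function

universe u

theorem Cardinal.mk_range_comp_comp_le {A B : Type*} {C D : Type u}
    (l : A → B) (β : B → C) (μ : C → D) :
    #(range (μ ∘ β ∘ l)) ≤ #(range β) :=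
  calc #(range (μ ∘ β ∘ l)) = #(μ '' range (β ∘ l)) := by rw [range_comp]
    _ ≤ #(range (β ∘ l)) := mk_image_le
    _ ≤ #(range β) := mk_le_mk_of_subset (range_comp_subset_range l β)

namespace inQ

variable {X : Type*} {Y : Set X}

theorem of_factorsThrough {α l : X → X} (hα : inQ Y α) (hl : range l ⊆ Y)
    (h : l.FactorsThrough α) : inQ Y l := by
  refine ⟨hl, ?_⟩
  rintro _ ⟨x, rfl⟩
  obtain ⟨y, hy, hyx⟩ := hα.2 (mem_range_self x)
  exact ⟨y, hy, h hyx⟩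

theorem exists_factor_of_mk_range_le {α β : X → X} (hα : inQ Y α) (hβ : inQ Y β)
    (h : #(range α) ≤ #(range β)) :
    ∃ l μ : X → X, inQ Y l ∧ inQ Y μ ∧ α = μ ∘ β ∘ l := by
  obtain ⟨θ⟩ := h
  choose s hsY hβs using fun b : range β => hβ.2 b.2
  let l : X → X := fun x => s (θ ⟨α x, mem_range_self x⟩)
  let μ : X → X := extend (fun a => (θ a : X)) (fun a => (a : X)) α
  have hθ : Injective fun a => (θ a : X) := Subtype.val_injective.comp θ.injective
  have hμθ : ∀ a, μ (θ a) = a := hθ.extend_apply _ _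
  have hμ_range : range μ ⊆ range α := by
    rintro _ ⟨z, rfl⟩
    by_cases hz : ∃ a, (θ a : X) = z
    · obtain ⟨a, rfl⟩ := hz
      exact hμθ a ▸ a.2
    · rw [show μ z = α z from extend_apply' _ _ _ hz]
      exact mem_range_self z
  refine ⟨l, μ, hα.of_factorsThrough ?_ ?_, ⟨hμ_range.trans hα.1, ?_⟩, ?_⟩
  · rintro _ ⟨x, rfl⟩
    exact hsY _
  · intro x y hxy
    simp only [l, hxy]
  · intro a ha
    exact ⟨_, hβ.1 (θ ⟨a, hμ_range ha⟩).2, hμθ _⟩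
  · funext x
    simp only [comp_apply, l, hβs, hμθ]

end inQ

theorem GreenJ_in_Q_general {X : Type*} (Y : Set X) :
    (∀ α β : X → X, inQ Y α → inQ Y β →
      ((∃ l μ : X → X, inQ Y l ∧ inQ Y μ ∧ α = μ ∘ β ∘ l) ↔
        Cardinal.mk (Set.range α) ≤ Cardinal.mk (Set.range β))) ∧
    (∀ α β : X → X, inQ Y α → inQ Y β →
      ((∃ l μ l' μ' : X → X,
          (inQ Y l ∨ l = id) ∧ (inQ Y μ ∨ μ = id) ∧
          (inQ Y l' ∨ l' = id) ∧ (inQ Y μ' ∨ μ' = id) ∧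
          α = μ ∘ β ∘ l ∧ β = μ' ∘ α ∘ l') ↔
        Cardinal.mk (Set.range α) = Cardinal.mk (Set.range β))) := by
  refine ⟨fun α β hα hβ => ⟨?_, inQ.exists_factor_of_mk_range_le hα hβ⟩,
    fun α β hα hβ => ⟨?_, fun h => ?_⟩⟩
  · rintro ⟨l, μ, -, -, h⟩
    exact h ▸ mk_range_comp_comp_le l β μ
  · rintro ⟨l, μ, l', μ', -, -, -, -, h, h'⟩
    exact le_antisymm (h ▸ mk_range_comp_comp_le l β μ) (h' ▸ mk_range_comp_comp_le l' α μ')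
  · obtain ⟨l, μ, hl, hμ, hαβ⟩ := inQ.exists_factor_of_mk_range_le hα hβ h.le
    obtain ⟨l', μ', hl', hμ', hβα⟩ := inQ.exists_factor_of_mk_range_le hβ hα h.ge
    exact ⟨l, μ, l', μ', .inl hl, .inl hμ, .inl hl', .inl hμ', hαβ, hβα⟩

/-- Let `X` be a set, `Y` a proper subset of `X` with at least two
elements, and `Q = {α ∈ T(X,Y) : α(X) ⊆ α(Y)}` (multiplication `α·β := β ∘ α`).
For `α, β ∈ Q`: `α = λ·β·μ` with `λ, μ ∈ Q` iff `|α(X)| ≤ |β(X)|`.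
Consequently `α 𝓙 β` in `Q` iff `|α(X)| = |β(X)|`. -/
theorem GreenJ_in_Q {X : Type*} (Y : Set X) (hY : Y.Nontrivial)
    (hYX : Y ≠ Set.univ) :
    (∀ α β : X → X, inQ Y α → inQ Y β →
      ((∃ l μ : X → X, inQ Y l ∧ inQ Y μ ∧ α = μ ∘ β ∘ l) ↔
        Cardinal.mk (Set.range α) ≤ Cardinal.mk (Set.range β))) ∧
    (∀ α β : X → X, inQ Y α → inQ Y β →
      ((∃ l μ l' μ' : X → X,
          (inQ Y l ∨ l = id) ∧ (inQ Y μ ∨ μ = id) ∧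
          (inQ Y l' ∨ l' = id) ∧ (inQ Y μ' ∨ μ' = id) ∧
          α = μ ∘ β ∘ l ∧ β = μ' ∘ α ∘ l') ↔
        Cardinal.mk (Set.range α) = Cardinal.mk (Set.range β))) :=
  GreenJ_in_Q_general Y
end

section
/- Let X be a set and Y a proper subset of X with at least two elements. For a nonempty subset S ⊆ T(X,Y), define r(S) as the least cardinal κ ≤ |Y|⁺ such that |α(Y)| < κ for all α ∈ S, and define K(S) = {β ∈ T(X,Y) : ker α ⊆ ker β for some α ∈ S}; for a cardinal k let T_k = {α ∈ T(X,Y) : |α(X)| < k}. Then the (nonempty two-sided) ideals of T(X,Y) are precisely the sets T_{r(S)} ∪ K(S) and T_{r(S)⁺} ∪ K(S), where S ranges over the nonempty subsets of T(X,Y). -/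
/-!
Every ideal `I` is of the first form with `S = I`. Indeed `I ⊆ K(I)` trivially; conversely a map
`γ ∈ T(X,Y)` whose kernel contains `ker α` factors as `g ∘ α` with `g ∈ T(X,Y)`, so `K(I) ⊆ I`;
and if `|γ(X)| < r(I)` then `|γ(X)| ≤ |α(Y)|` for some `α ∈ I`, which yields `φ ∈ T(X,Y)` with
`ker (α ∘ φ) ⊆ ker γ`, so `γ ∈ K(I) ⊆ I`.

Conversely, for any `k` with `|α(Y)| < k` for all `α ∈ S` (both `r(S)` and `r(S)⁺` qualify),
`T_k ∪ K(S)` is an ideal: `T_k` is, `K(S)` is closed under composition on the left, and for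
`γ ∈ K(S)` witnessed by `α ∈ S` the map `γ ∘ β` has rank at most `|γ(Y)| ≤ |α(Y)| < k`.
-/

universe u

/-- `T_k`: the maps in `T(X,Y)` of rank strictly less than `k`. -/
def Tk {X : Type u} (Y : Set X) (k : Cardinal.{u}) : Set (X → X) :=
  {α | Set.range α ⊆ Y ∧ Cardinal.mk (Set.range α) < k}

/-- `r(S)`: the least cardinal `κ ≤ |Y|⁺` such that `|α(Y)| < κ` for all `α ∈ S`. -/
noncomputable def rS {X : Type u} (Y : Set X) (S : Set (X → X)) : Cardinal.{u} :=
  sInf {κ : Cardinal.{u} | κ ≤ Order.succ (Cardinal.mk ↥Y) ∧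
    ∀ α ∈ S, Cardinal.mk (α '' Y) < κ}

/-- `K(S)`: the maps in `T(X,Y)` whose kernel contains the kernel of some `α ∈ S`. -/
def KS {X : Type u} (Y : Set X) (S : Set (X → X)) : Set (X → X) :=
  {β | Set.range β ⊆ Y ∧ ∃ α ∈ S, ∀ a b : X, α a = α b → β a = β b}

open Set Function Cardinal

structure IsTXYIdeal {X : Type u} (Y : Set X) (I : Set (X → X)) : Prop where
  nonempty : I.Nonempty
  subset : I ⊆ {α | range α ⊆ Y}
  comp_left_mem {α β : X → X} : α ∈ I → range β ⊆ Y → β ∘ α ∈ I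
  comp_right_mem {α β : X → X} : α ∈ I → range β ⊆ Y → α ∘ β ∈ I

theorem isTXYIdeal_iff {X : Type u} {Y : Set X} {I : Set (X → X)} :
    IsTXYIdeal Y I ↔ I.Nonempty ∧ I ⊆ {α | range α ⊆ Y} ∧
      ∀ α ∈ I, ∀ β : X → X, range β ⊆ Y → β ∘ α ∈ I ∧ α ∘ β ∈ I :=
  ⟨fun h ↦ ⟨h.nonempty, h.subset, fun _ hα _ hβ ↦ ⟨h.comp_left_mem hα hβ, h.comp_right_mem hα hβ⟩⟩,
    fun ⟨hne, hsub, hcomp⟩ ↦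
      ⟨hne, hsub, fun hα hβ ↦ (hcomp _ hα _ hβ).1, fun hα hβ ↦ (hcomp _ hα _ hβ).2⟩⟩

section Factorization

variable {A B C D : Type u}

theorem exists_range_subset_comp_eq_s12 {α : A → B} {γ : A → C} {Y : Set C} {y : C} (hy : y ∈ Y)
    (hγ : range γ ⊆ Y) (h : γ.FactorsThrough α) : ∃ g : B → C, range g ⊆ Y ∧ g ∘ α = γ :=
  ⟨extend α γ fun _ ↦ y,
    (range_extend_subset _ _ _).trans (union_subset hγ (by rintro _ ⟨_, _, rfl⟩; exact hy)),
    h.extend_comp _⟩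

theorem mk_image_le_of_factorsThrough {α : A → B} {γ : A → C} (h : γ.FactorsThrough α)
    (s : Set A) : #(γ '' s) ≤ #(α '' s) := by
  rcases s.eq_empty_or_nonempty with rfl | ⟨a, -⟩
  · simp
  rw [← h.extend_comp fun _ ↦ γ a, image_comp]
  exact mk_image_le

theorem exists_factorsThrough_comp_of_mk_range_le {γ : A → B} {α : C → D} {Y : Set C}
    (h : #(range γ) ≤ #(α '' Y)) :
    ∃ φ : A → C, range φ ⊆ Y ∧ γ.FactorsThrough (α ∘ φ) := by
  obtain ⟨j⟩ := (Cardinal.le_def _ _).1 h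
  choose w hwY hwα using fun z ↦ (j z).2
  refine ⟨fun a ↦ w ⟨γ a, mem_range_self a⟩, range_subset_iff.2 fun a ↦ hwY _, fun a b hab ↦ ?_⟩
  simp only [comp_apply, hwα] at hab
  exact congrArg Subtype.val (j.injective (Subtype.ext hab))

end Factorization

section TXY

variable {X : Type u} {Y : Set X} {S : Set (X → X)} {k : Cardinal.{u}}

theorem mk_image_lt_rS (hS : S ⊆ {α | range α ⊆ Y}) {α : X → X} (hα : α ∈ S) :
    #(α '' Y) < rS Y S := by
  refine (csInf_mem (s := {κ | κ ≤ Order.succ #Y ∧ ∀ α ∈ S, #(α '' Y) < κ})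
    ⟨_, le_rfl, fun β hβ ↦ (mk_le_mk_of_subset ?_).trans_lt (Order.lt_succ _)⟩).2 α hα
  exact image_subset_iff.2 fun y _ ↦ hS hβ (mem_range_self y)

theorem exists_mk_range_le_of_lt_rS {γ : X → X} (hγ : range γ ⊆ Y) (h : #(range γ) < rS Y S) :
    ∃ α ∈ S, #(range γ) ≤ #(α '' Y) := by
  by_contra! hc
  exact h.not_ge (csInf_le' ⟨(mk_le_mk_of_subset hγ).trans (Order.le_succ _), hc⟩)

theorem comp_left_mem_Tk {γ β : X → X} (hγ : γ ∈ Tk Y k) (hβ : range β ⊆ Y) :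
    β ∘ γ ∈ Tk Y k :=
  ⟨(range_comp_subset_range γ β).trans hβ, by rw [range_comp]; exact mk_image_le.trans_lt hγ.2⟩

theorem comp_right_mem_Tk {γ : X → X} (hγ : γ ∈ Tk Y k) (β : X → X) : γ ∘ β ∈ Tk Y k :=
  ⟨(range_comp_subset_range β γ).trans hγ.1,
    (mk_le_mk_of_subset (range_comp_subset_range β γ)).trans_lt hγ.2⟩

theorem comp_left_mem_KS {γ β : X → X} (hγ : γ ∈ KS Y S) (hβ : range β ⊆ Y) :
    β ∘ γ ∈ KS Y S := by
  obtain ⟨-, α, hα, hker⟩ := hγ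
  exact ⟨(range_comp_subset_range γ β).trans hβ, α, hα, fun a b hab ↦ congrArg β (hker a b hab)⟩

theorem comp_right_mem_Tk_of_mem_KS (hk : ∀ α ∈ S, #(α '' Y) < k) {γ β : X → X}
    (hγ : γ ∈ KS Y S) (hβ : range β ⊆ Y) : γ ∘ β ∈ Tk Y k := by
  obtain ⟨hγY, α, hα, hker⟩ := hγ
  refine ⟨(range_comp_subset_range β γ).trans hγY, ?_⟩
  calc #(range (γ ∘ β)) ≤ #(γ '' Y) := by rw [range_comp]; exact mk_le_mk_of_subset (image_mono hβ)
    _ ≤ #(α '' Y) := mk_image_le_of_factorsThrough (fun a b hab ↦ hker a b hab) Y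
    _ < k := hk α hα

theorem isTXYIdeal_Tk_union_KS {y : X} (hy : y ∈ Y) (hS : S.Nonempty)
    (hk : ∀ α ∈ S, #(α '' Y) < k) : IsTXYIdeal Y (Tk Y k ∪ KS Y S) where
  nonempty :=
    let ⟨α, hα⟩ := hS
    ⟨fun _ ↦ y, Or.inr ⟨range_subset_iff.2 fun _ ↦ hy, α, hα, fun _ _ _ ↦ rfl⟩⟩
  subset := by rintro γ (hγ | hγ) <;> exact hγ.1
  comp_left_mem := by
    rintro γ β (hγ | hγ) hβ
    exacts [Or.inl (comp_left_mem_Tk hγ hβ), Or.inr (comp_left_mem_KS hγ hβ)]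
  comp_right_mem := by
    rintro γ β (hγ | hγ) hβ
    exacts [Or.inl (comp_right_mem_Tk hγ β), Or.inl (comp_right_mem_Tk_of_mem_KS hk hγ hβ)]

namespace IsTXYIdeal

variable {I : Set (X → X)}

theorem KS_subset (hI : IsTXYIdeal Y I) {y : X} (hy : y ∈ Y) : KS Y I ⊆ I := by
  rintro γ ⟨hγ, α, hα, hker⟩
  obtain ⟨g, hg, rfl⟩ := exists_range_subset_comp_eq_s12 hy hγ (fun a b hab ↦ hker a b hab)
  exact hI.comp_left_mem hα hg

theorem Tk_rS_subset (hI : IsTXYIdeal Y I) {y : X} (hy : y ∈ Y) : Tk Y (rS Y I) ⊆ I := by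
  rintro γ ⟨hγ, hlt⟩
  obtain ⟨α, hα, hle⟩ := exists_mk_range_le_of_lt_rS hγ hlt
  obtain ⟨φ, hφ, hker⟩ := exists_factorsThrough_comp_of_mk_range_le hle
  exact hI.KS_subset hy ⟨hγ, α ∘ φ, hI.comp_right_mem hα hφ, fun a b hab ↦ hker hab⟩

theorem eq_Tk_rS_union_KS (hI : IsTXYIdeal Y I) {y : X} (hy : y ∈ Y) :
    I = Tk Y (rS Y I) ∪ KS Y I :=
  (union_subset (hI.Tk_rS_subset hy) (hI.KS_subset hy)).antisymm'
    fun γ hγ ↦ Or.inr ⟨hI.subset hγ, γ, hγ, fun _ _ ↦ id⟩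

end IsTXYIdeal

end TXY

theorem ideals_of_TXY_general {X : Type u} (Y : Set X) (hY : Y.Nontrivial)
    (I : Set (X → X)) :
    (I.Nonempty ∧ I ⊆ {α | Set.range α ⊆ Y} ∧
      ∀ α ∈ I, ∀ β : X → X, Set.range β ⊆ Y → β ∘ α ∈ I ∧ α ∘ β ∈ I) ↔
    ∃ S : Set (X → X), S.Nonempty ∧ S ⊆ {α | Set.range α ⊆ Y} ∧
      (I = Tk Y (rS Y S) ∪ KS Y S ∨ I = Tk Y (Order.succ (rS Y S)) ∪ KS Y S) := by
  obtain ⟨y, hy⟩ := hY.nonempty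
  rw [← isTXYIdeal_iff]
  constructor
  · intro hI
    exact ⟨I, hI.nonempty, hI.subset, Or.inl (hI.eq_Tk_rS_union_KS hy)⟩
  · rintro ⟨S, hS, hST, rfl | rfl⟩
    · exact isTXYIdeal_Tk_union_KS hy hS fun _ ↦ mk_image_lt_rS hST
    · exact isTXYIdeal_Tk_union_KS hy hS fun _ hα ↦
        (mk_image_lt_rS hST hα).trans_le (Order.le_succ _)

/-- Let `X` be a set and `Y` a proper subset of `X` with at least two
elements (multiplication on `T(X,Y)` is `α·β := β ∘ α`). The nonempty two-sided ideals
of `T(X,Y)` are precisely the sets `T_{r(S)} ∪ K(S)` and `T_{r(S)⁺} ∪ K(S)`, where `S`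
ranges over the nonempty subsets of `T(X,Y)`. -/
theorem ideals_of_TXY {X : Type u} (Y : Set X) (hY : Y.Nontrivial)
    (hYX : Y ≠ Set.univ) (I : Set (X → X)) :
    (I.Nonempty ∧ I ⊆ {α | Set.range α ⊆ Y} ∧
      ∀ α ∈ I, ∀ β : X → X, Set.range β ⊆ Y → β ∘ α ∈ I ∧ α ∘ β ∈ I) ↔
    ∃ S : Set (X → X), S.Nonempty ∧ S ⊆ {α | Set.range α ⊆ Y} ∧
      (I = Tk Y (rS Y S) ∪ KS Y S ∨ I = Tk Y (Order.succ (rS Y S)) ∪ KS Y S) :=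
  ideals_of_TXY_general Y hY I
end

section
/- Let X be a set and Y a proper subset of X with at least two elements. For α, β ∈ T(X,Y), the following are equivalent: (1) α 𝓛̃ β, i.e. for every idempotent η ∈ T(X,Y) one has α·η = α if and only if β·η = β; (2) α 𝓛* β, i.e. for all γ, δ ∈ T(X,Y) ∪ {id}, α·γ = α·δ if and only if β·γ = β·δ; (3) α(X) = β(X). In particular the relations 𝓛* and 𝓛̃ coincide on T(X,Y). -/
/-! Every condition in sight only depends on how a map acts on `range α`, because
`γ ∘ α = δ ∘ α ↔ EqOn γ δ (range α)`; this gives `range α = range β ⇒` (1), (2).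
Conversely, a point `b ∈ range β \ range α` is detected by an idempotent of `T(X,Y)`
(a retraction of `X` onto `range α`, which fixes `α` but moves `b`) and by a pair of maps
into `Y` that agree off `b` and differ at `b`; the latter needs two points of `Y`. -/

section

open Set Function

variable {X : Type*}

theorem exists_retraction_onto {S : Set X} (hS : S.Nonempty) :
    ∃ η : X → X, range η ⊆ S ∧ EqOn η id S := by
  classical
  obtain ⟨a, ha⟩ := hS
  refine ⟨S.piecewise id (fun _ => a), ?_, fun x hx => piecewise_eq_of_mem _ _ _ hx⟩
  rintro _ ⟨x, rfl⟩
  by_cases hx : x ∈ S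
  · rwa [piecewise_eq_of_mem _ _ _ hx]
  · rwa [piecewise_eq_of_notMem _ _ _ hx]

theorem comp_self_of_eqOn_id_range {η : X → X} (h : EqOn η id (range η)) : η ∘ η = η :=
  eqOn_range.mp h

theorem range_subset_of_forall_idempotent_comp {Y : Set X} {α β : X → X}
    (hα : range α ⊆ Y)
    (h : ∀ η : X → X, range η ⊆ Y → η ∘ η = η → η ∘ α = α → η ∘ β = β) :
    range β ⊆ range α := by
  cases isEmpty_or_nonempty X
  · simp [range_eq_empty]
  obtain ⟨η, hηα, hη_id⟩ := exists_retraction_onto (range_nonempty α)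
  have hηβ : η ∘ β = β :=
    h η (hηα.trans hα) (comp_self_of_eqOn_id_range (hη_id.mono hηα)) (eqOn_range.mp hη_id)
  exact hηβ ▸ range_comp_subset_range β η |>.trans hηα

theorem range_subset_of_forall_comp_eq_comp {Y : Set X} (hY : Y.Nontrivial) {α β : X → X}
    (h : ∀ γ δ : X → X, range γ ⊆ Y → range δ ⊆ Y → γ ∘ α = δ ∘ α → γ ∘ β = δ ∘ β) :
    range β ⊆ range α := by
  classical
  obtain ⟨y₁, hy₁, y₂, hy₂, hne⟩ := hY
  rintro _ ⟨x, rfl⟩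
  by_contra hx
  have hγ : range (fun _ : X => y₁) ⊆ Y := range_subset_iff.mpr fun _ => hy₁
  have hδ : range (update (fun _ : X => y₁) (β x) y₂) ⊆ Y := by
    refine range_subset_iff.mpr fun z => ?_
    by_cases hz : z = β x
    · simpa [hz] using hy₂
    · simpa [hz] using hy₁
  have hαβ := h _ _ hγ hδ (update_comp_eq_of_notMem_range _ _ hx).symm
  exact hne (by simpa using congrFun hαβ x)

end

theorem Ltilde_eq_Lstar_in_TXY_general {X : Type*} (Y : Set X) (hY : Y.Nontrivial)
    (α β : X → X)
    (hα : Set.range α ⊆ Y) (hβ : Set.range β ⊆ Y) :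
    ((∀ η : X → X, Set.range η ⊆ Y → η ∘ η = η →
        ((η ∘ α = α) ↔ (η ∘ β = β))) ↔
      Set.range α = Set.range β) ∧
    ((∀ γ δ : X → X, (Set.range γ ⊆ Y ∨ γ = id) → (Set.range δ ⊆ Y ∨ δ = id) →
        ((γ ∘ α = δ ∘ α) ↔ (γ ∘ β = δ ∘ β))) ↔
      Set.range α = Set.range β) := by
  refine ⟨⟨fun h => ?_, fun h η _ _ => ?_⟩, ⟨fun h => ?_, fun h γ δ _ _ => ?_⟩⟩
  · exact (range_subset_of_forall_idempotent_comp hβ fun η hηY hη => (h η hηY hη).mpr).antisymm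
      (range_subset_of_forall_idempotent_comp hα fun η hηY hη => (h η hηY hη).mp)
  · change η ∘ α = id ∘ α ↔ η ∘ β = id ∘ β
    rw [← Set.eqOn_range, ← Set.eqOn_range, h]
  · exact (range_subset_of_forall_comp_eq_comp hY
        fun γ δ hγ hδ => (h γ δ (.inl hγ) (.inl hδ)).mpr).antisymm
      (range_subset_of_forall_comp_eq_comp hY fun γ δ hγ hδ => (h γ δ (.inl hγ) (.inl hδ)).mp)
  · rw [← Set.eqOn_range, ← Set.eqOn_range, h]

/-- Let `X` be a set and `Y` a proper subset of `X` with at least two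
elements (multiplication on `T(X,Y)` is `α·β := β ∘ α`, so `α·η = η ∘ α`). For
`α, β ∈ T(X,Y)` the following are equivalent: `α 𝓛̃ β`; `α 𝓛* β`; `α(X) = β(X)`.
In particular `𝓛*` and `𝓛̃` coincide on `T(X,Y)`. -/
theorem Ltilde_eq_Lstar_in_TXY {X : Type*} (Y : Set X) (hY : Y.Nontrivial)
    (hYX : Y ≠ Set.univ) (α β : X → X)
    (hα : Set.range α ⊆ Y) (hβ : Set.range β ⊆ Y) :
    ((∀ η : X → X, Set.range η ⊆ Y → η ∘ η = η →
        ((η ∘ α = α) ↔ (η ∘ β = β))) ↔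
      Set.range α = Set.range β) ∧
    ((∀ γ δ : X → X, (Set.range γ ⊆ Y ∨ γ = id) → (Set.range δ ⊆ Y ∨ δ = id) →
        ((γ ∘ α = δ ∘ α) ↔ (γ ∘ β = δ ∘ β))) ↔
      Set.range α = Set.range β) :=
  Ltilde_eq_Lstar_in_TXY_general Y hY α β hα hβ
end

section
/- Let X be a set and Y a proper subset of X with at least two elements, and let Q = {α ∈ T(X,Y) : α(X) ⊆ α(Y)}. For α, β ∈ T(X,Y), α 𝓡* β holds in T(X,Y) if and only if one of the following occurs: (1) α, β ∈ Q and ker α = ker β; or (2) α, β ∉ Q and ker α ∩ (Y × Y) = ker β ∩ (Y × Y), i.e. for all y, y' ∈ Y, α(y) = α(y') if and only if β(y) = β(y'). -/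
/-!
Write `γ·α = α ∘ γ`. Constant maps into `Y` show that `𝓡*` forces `ker α` and `ker β` to agree
on `Y × Y`, and taking `δ = id` shows that `α ∘ γ = α ↔ β ∘ γ = β` for every `γ` into `Y`. Now `α`
is regular exactly when some `γ` into `Y` satisfies `α ∘ γ = α` (send `x` to a preimage in `Y` of
`α x`). So `α` and `β` are regular together, and for regular ones a common such `γ` moves every
pair of points into `Y` without changing either kernel, so the kernels agree everywhere. In the
other direction, equal kernels on a set containing the ranges of `γ` and `δ` give
`α ∘ γ = α ∘ δ ↔ β ∘ γ = β ∘ δ`, and when neither map is regular, `α ∘ γ = α` and `β ∘ γ = β`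
both fail for `γ` into `Y`.
-/

open Function

section

variable {X Z W : Type*} {Y : Set X}

theorem range_subset_image_iff_exists_comp_eq {α : X → Z} :
    Set.range α ⊆ α '' Y ↔ ∃ γ : X → X, Set.range γ ⊆ Y ∧ α ∘ γ = α := by
  constructor
  · intro hα
    choose γ hγY hγα using fun x => hα ⟨x, rfl⟩
    exact ⟨γ, Set.range_subset_iff.mpr hγY, funext hγα⟩
  · rintro ⟨γ, hγ, hαγ⟩ _ ⟨x, rfl⟩
    exact ⟨γ x, hγ ⟨x, rfl⟩, congrFun hαγ x⟩

theorem comp_eq_comp_iff_of_ker_eqOn {V : Type*} {S : Set X} {α : X → Z} {β : X → W}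
    (hker : ∀ a ∈ S, ∀ b ∈ S, α a = α b ↔ β a = β b) {γ δ : V → X}
    (hγ : Set.range γ ⊆ S) (hδ : Set.range δ ⊆ S) :
    α ∘ γ = α ∘ δ ↔ β ∘ γ = β ∘ δ := by
  simp only [funext_iff, comp_apply]
  exact forall_congr' fun x => hker _ (hγ ⟨x, rfl⟩) _ (hδ ⟨x, rfl⟩)

theorem range_subset_image_iff_of_comp_eq_self_iff {α : X → Z} {β : X → W}
    (hfix : ∀ γ : X → X, Set.range γ ⊆ Y → (α ∘ γ = α ↔ β ∘ γ = β)) :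
    Set.range α ⊆ α '' Y ↔ Set.range β ⊆ β '' Y := by
  simp only [range_subset_image_iff_exists_comp_eq]
  exact exists_congr fun γ => and_congr_right fun hγ => hfix γ hγ

theorem ker_eq_of_comp_eq_self_iff {α : X → Z} {β : X → W}
    (hfix : ∀ γ : X → X, Set.range γ ⊆ Y → (α ∘ γ = α ↔ β ∘ γ = β))
    (hker : ∀ y ∈ Y, ∀ y' ∈ Y, α y = α y' ↔ β y = β y') (hα : Set.range α ⊆ α '' Y)
    (a b : X) : α a = α b ↔ β a = β b := by
  obtain ⟨γ, hγ, hαγ⟩ := range_subset_image_iff_exists_comp_eq.mp hα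
  have hβγ : β ∘ γ = β := (hfix γ hγ).mp hαγ
  rw [← congrFun hαγ a, ← congrFun hαγ b, ← congrFun hβγ a, ← congrFun hβγ b]
  exact hker _ (hγ ⟨a, rfl⟩) _ (hγ ⟨b, rfl⟩)

end

theorem Rstar_in_TXY_general {X : Type*} (Y : Set X) (α β : X → X) :
    (∀ γ δ : X → X, (Set.range γ ⊆ Y ∨ γ = id) → (Set.range δ ⊆ Y ∨ δ = id) →
      ((α ∘ γ = α ∘ δ) ↔ (β ∘ γ = β ∘ δ))) ↔
    ((Set.range α ⊆ α '' Y ∧ Set.range β ⊆ β '' Y ∧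
        ∀ a b : X, α a = α b ↔ β a = β b) ∨
      (¬ Set.range α ⊆ α '' Y ∧ ¬ Set.range β ⊆ β '' Y ∧
        ∀ y ∈ Y, ∀ y' ∈ Y, (α y = α y' ↔ β y = β y'))) := by
  constructor
  · intro h
    have hkerY : ∀ y ∈ Y, ∀ y' ∈ Y, α y = α y' ↔ β y = β y' := fun y hy y' hy' => by
      have : Nonempty X := ⟨y⟩
      simpa only [comp_const, const_inj] using h (const X y) (const X y')
        (.inl (Set.range_const_subset.trans (Set.singleton_subset_iff.mpr hy)))
        (.inl (Set.range_const_subset.trans (Set.singleton_subset_iff.mpr hy')))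
    have hfix : ∀ γ : X → X, Set.range γ ⊆ Y → (α ∘ γ = α ↔ β ∘ γ = β) :=
      fun γ hγ => h γ id (.inl hγ) (.inr rfl)
    have hreg := range_subset_image_iff_of_comp_eq_self_iff hfix
    by_cases hα : Set.range α ⊆ α '' Y
    · exact .inl ⟨hα, hreg.mp hα, ker_eq_of_comp_eq_self_iff hfix hkerY hα⟩
    · exact .inr ⟨hα, hreg.not.mp hα, hkerY⟩
  · rintro (⟨-, -, hker⟩ | ⟨hα, hβ, hker⟩) γ δ hγ hδ
    · exact comp_eq_comp_iff_of_ker_eqOn (S := Set.univ) (fun a _ b _ => hker a b)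
        (Set.subset_univ _) (Set.subset_univ _)
    · have not_fix : ∀ ε : X → X, Set.range ε ⊆ Y → α ∘ ε ≠ α ∧ β ∘ ε ≠ β := fun ε hε =>
        ⟨fun h => hα (range_subset_image_iff_exists_comp_eq.mpr ⟨ε, hε, h⟩),
          fun h => hβ (range_subset_image_iff_exists_comp_eq.mpr ⟨ε, hε, h⟩)⟩
      rcases hγ with hγ | rfl <;> rcases hδ with hδ | rfl
      · exact comp_eq_comp_iff_of_ker_eqOn hker hγ hδ
      · exact iff_of_false (not_fix γ hγ).1 (not_fix γ hγ).2
      · exact iff_of_false (Ne.symm (not_fix δ hδ).1) (Ne.symm (not_fix δ hδ).2)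
      · exact iff_of_true rfl rfl

/-- Let `X` be a set, `Y` a proper subset of `X` with at least two
elements, and `Q = {α ∈ T(X,Y) : α(X) ⊆ α(Y)}` (multiplication `α·β := β ∘ α`, so
`γ·α = α ∘ γ`). For `α, β ∈ T(X,Y)`: `α 𝓡* β` iff either (`α, β ∈ Q` and
`ker α = ker β`) or (`α, β ∉ Q` and `ker α ∩ (Y×Y) = ker β ∩ (Y×Y)`). -/
theorem Rstar_in_TXY {X : Type*} (Y : Set X) (hY : Y.Nontrivial)
    (hYX : Y ≠ Set.univ) (α β : X → X)
    (hα : Set.range α ⊆ Y) (hβ : Set.range β ⊆ Y) :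
    (∀ γ δ : X → X, (Set.range γ ⊆ Y ∨ γ = id) → (Set.range δ ⊆ Y ∨ δ = id) →
      ((α ∘ γ = α ∘ δ) ↔ (β ∘ γ = β ∘ δ))) ↔
    ((Set.range α ⊆ α '' Y ∧ Set.range β ⊆ β '' Y ∧
        ∀ a b : X, α a = α b ↔ β a = β b) ∨
      (¬ Set.range α ⊆ α '' Y ∧ ¬ Set.range β ⊆ β '' Y ∧
        ∀ y ∈ Y, ∀ y' ∈ Y, (α y = α y' ↔ β y = β y'))) :=
  Rstar_in_TXY_general Y α β
end

section
/- Let X be a set and Y a proper subset of X with at least two elements, and let Q = {α ∈ T(X,Y) : α(X) ⊆ α(Y)}. For α, β ∈ T(X,Y), α 𝓡̃ β holds in T(X,Y) (i.e. for every idempotent η ∈ T(X,Y), η·α = α if and only if η·β = β) if and only if either both α ∉ Q and β ∉ Q, or (α, β ∈ Q and ker α = ker β). -/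
/-!
An idempotent `η` with image in `Y` fixes `α` (i.e. `α ∘ η = α`) exactly when it moves every
point to a point of `Y` in the same `ker α`-class; so such an `η` exists iff `α` is regular,
and when `α` is regular the choice of one representative in `Y` per class gives an idempotent
fixing `α` whose kernel is `ker α`. Hence no idempotent fixes a non-regular element, and for
regular elements "fixed by the same idempotents" means "same kernel".
-/

section

variable {X : Type*} {Y : Set X} {α β η : X → X}

lemma range_subset_image_of_comp_eq (hη : Set.range η ⊆ Y) (hfix : α ∘ η = α) :
    Set.range α ⊆ α '' Y := by
  rintro _ ⟨x, rfl⟩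
  exact ⟨η x, hη ⟨x, rfl⟩, congrFun hfix x⟩

lemma comp_eq_of_ker_le (hker : ∀ a b, α a = α b → β a = β b) (hfix : α ∘ η = α) :
    β ∘ η = β :=
  funext fun x => hker (η x) x (congrFun hfix x)

lemma exists_idempotent_comp_eq_of_range_subset_image (hQ : Set.range α ⊆ α '' Y) :
    ∃ η : X → X, Set.range η ⊆ Y ∧ η ∘ η = η ∧ α ∘ η = α ∧
      ∀ a b, α a = α b → η a = η b := by
  have hrep : ∀ y : Set.range α, ∃ a ∈ Y, α a = y := fun y => hQ y.2
  choose rep hrepY hrepα using hrep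
  let η : X → X := fun x => rep ⟨α x, x, rfl⟩
  have hαη : α ∘ η = α := funext fun x => hrepα _
  refine ⟨η, ?_, ?_, hαη, fun a b hab => ?_⟩
  · rintro _ ⟨x, rfl⟩
    exact hrepY _
  · funext x
    exact congrArg rep (Subtype.ext (congrFun hαη x))
  · exact congrArg rep (Subtype.ext hab)

lemma range_subset_image_and_ker_le_of_forall_idempotent
    (h : ∀ η : X → X, Set.range η ⊆ Y → η ∘ η = η → α ∘ η = α → β ∘ η = β)
    (hQα : Set.range α ⊆ α '' Y) :
    Set.range β ⊆ β '' Y ∧ ∀ a b, α a = α b → β a = β b := by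
  obtain ⟨η, hηY, hidem, hfixα, hker⟩ := exists_idempotent_comp_eq_of_range_subset_image hQα
  have hfixβ : β ∘ η = β := h η hηY hidem hfixα
  refine ⟨range_subset_image_of_comp_eq hηY hfixβ, fun a b hab => ?_⟩
  calc β a = β (η a) := (congrFun hfixβ a).symm
    _ = β (η b) := by rw [hker a b hab]
    _ = β b := congrFun hfixβ b

end

theorem Rtilde_in_TXY_general {X : Type*} (Y : Set X) (α β : X → X) :
    (∀ η : X → X, Set.range η ⊆ Y → η ∘ η = η →
      ((α ∘ η = α) ↔ (β ∘ η = β))) ↔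
    ((¬ Set.range α ⊆ α '' Y ∧ ¬ Set.range β ⊆ β '' Y) ∨
      (Set.range α ⊆ α '' Y ∧ Set.range β ⊆ β '' Y ∧
        ∀ a b : X, α a = α b ↔ β a = β b)) := by
  constructor
  · intro h
    have hαβ := range_subset_image_and_ker_le_of_forall_idempotent fun η hηY hidem =>
      (h η hηY hidem).mp
    have hβα := range_subset_image_and_ker_le_of_forall_idempotent fun η hηY hidem =>
      (h η hηY hidem).mpr
    by_cases hQα : Set.range α ⊆ α '' Y
    · obtain ⟨hQβ, hker⟩ := hαβ hQα
      exact Or.inr ⟨hQα, hQβ, fun a b => ⟨hker a b, (hβα hQβ).2 a b⟩⟩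
    · exact Or.inl ⟨hQα, fun hQβ => hQα (hβα hQβ).1⟩
  · rintro (⟨hQα, hQβ⟩ | ⟨-, -, hker⟩) η hηY -
    · exact ⟨fun hfix => (hQα (range_subset_image_of_comp_eq hηY hfix)).elim,
        fun hfix => (hQβ (range_subset_image_of_comp_eq hηY hfix)).elim⟩
    · exact ⟨comp_eq_of_ker_le fun a b => (hker a b).mp,
        comp_eq_of_ker_le fun a b => (hker a b).mpr⟩

/-- Let `X` be a set, `Y` a proper subset of `X` with at least two
elements, and `Q = {α ∈ T(X,Y) : α(X) ⊆ α(Y)}` (multiplication `α·β := β ∘ α`, so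
`η·α = α ∘ η`). For `α, β ∈ T(X,Y)`: `α 𝓡̃ β` iff either both `α, β ∉ Q`, or
(`α, β ∈ Q` and `ker α = ker β`). -/
theorem Rtilde_in_TXY {X : Type*} (Y : Set X) (hY : Y.Nontrivial)
    (hYX : Y ≠ Set.univ) (α β : X → X)
    (hα : Set.range α ⊆ Y) (hβ : Set.range β ⊆ Y) :
    (∀ η : X → X, Set.range η ⊆ Y → η ∘ η = η →
      ((α ∘ η = α) ↔ (β ∘ η = β))) ↔
    ((¬ Set.range α ⊆ α '' Y ∧ ¬ Set.range β ⊆ β '' Y) ∨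
      (Set.range α ⊆ α '' Y ∧ Set.range β ⊆ β '' Y ∧
        ∀ a b : X, α a = α b ↔ β a = β b)) :=
  Rtilde_in_TXY_general Y α β
end

section
/- Let X be a set and Y a proper subset of X with at least two elements. The relation 𝓡̃ on T(X,Y) is a left congruence (i.e. α 𝓡̃ β implies γ·α 𝓡̃ γ·β for all γ ∈ T(X,Y)) if and only if Y has exactly two elements. (This is the specialization to sets of the paper's criterion, since for a pure set one-dimensional subalgebras are singletons and there are no constants.) -/
/-!
Write `ker α` for the relation `α x = α y`. An idempotent `η ∈ T(X,Y)` with `α ∘ η = α` forces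
`α(X) = α(Y)`; conversely, when `α(X) = α(Y)`, the idempotent `η := s ∘ α`, with `s` choosing a
preimage in `Y` of each value, fixes `α` and has kernel `ker α`. So `𝓡̃` relates any two maps with
`α(X) ≠ α(Y)`, while on maps with `α(X) = α(Y)` it is equality of kernels.

If `Y = {a, b}`, a map into `Y` with `α(X) ≠ α(Y)` is constant on `Y`; hence `α 𝓡̃ β` forces `ker α`
and `ker β` to agree on `Y`, and since `γ` maps into `Y`, `ker (α ∘ γ) = ker (β ∘ γ)`.

If `Y` has a third element `c` and misses some `d`, let `α` send `a ↦ a`, `Y ∖ {a} ↦ b` and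
`X ∖ Y ↦ c`, and `β` send `Y ↦ a` and `X ∖ Y ↦ c`. Then `α d = β d = c` lies outside
`α(Y) ⊆ {a, b}` and `β(Y) = {a}`, so `α 𝓡̃ β`. After the retraction `γ` of `X` onto `Y` both
`α ∘ γ` and `β ∘ γ` take all their values on `Y`, but `β ∘ γ` is constant while `α ∘ γ` separates
`a` and `b`.
-/

open Set Function

section

variable {X : Type*}

/-- `α 𝓡̃ β` in `T(X, Y)`, where `η · α = α ∘ η`. -/
def RTilde (Y : Set X) (α β : X → X) : Prop :=
  ∀ η : X → X, range η ⊆ Y → η ∘ η = η → (α ∘ η = α ↔ β ∘ η = β)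

theorem range_subset_image_of_comp_eq_self {Y : Set X} {α η : X → X} (hη : range η ⊆ Y)
    (h : α ∘ η = α) : range α ⊆ α '' Y := by
  rintro _ ⟨x, rfl⟩
  exact ⟨η x, hη ⟨x, rfl⟩, congrFun h x⟩

theorem exists_idempotent_comp_eq_self_of_range_subset_image {Y : Set X} {α : X → X}
    (h : range α ⊆ α '' Y) :
    ∃ η : X → X, range η ⊆ Y ∧ η ∘ η = η ∧ α ∘ η = α ∧ ∀ x y, α x = α y → η x = η y := by
  classical
  let s : X → X := fun v => if hv : v ∈ α '' Y then hv.choose else v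
  have hs (x : X) : s (α x) ∈ Y ∧ α (s (α x)) = α x := by
    simp only [s, dif_pos (h ⟨x, rfl⟩)]
    exact (h ⟨x, rfl⟩).choose_spec
  refine ⟨s ∘ α, ?_, ?_, ?_, fun x y hxy => by simp only [comp_apply, hxy]⟩
  · rintro _ ⟨x, rfl⟩
    exact (hs x).1
  · funext x
    simp only [comp_apply, (hs x).2]
  · funext x
    exact (hs x).2

theorem apply_eq_of_not_range_subset_image_pair {a b : X} {α : X → X} (hα : range α ⊆ {a, b})
    (h : ¬ range α ⊆ α '' {a, b}) : α a = α b := by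
  by_contra hab
  apply h
  rintro _ ⟨x, rfl⟩
  have hx := hα ⟨x, rfl⟩
  have ha := hα ⟨a, rfl⟩
  have hb := hα ⟨b, rfl⟩
  simp only [mem_insert_iff, mem_singleton_iff] at hx ha hb
  have : α x = α a ∨ α x = α b := by grind
  rcases this with hxa | hxb
  · exact ⟨a, by simp, hxa.symm⟩
  · exact ⟨b, by simp, hxb.symm⟩

namespace RTilde

variable {Y : Set X} {a b : X} {α β : X → X}

theorem symm (h : RTilde Y α β) : RTilde Y β α :=
  fun η hηY hηη => (h η hηY hηη).symm

theorem of_not_range_subset_image (hα : ¬ range α ⊆ α '' Y) (hβ : ¬ range β ⊆ β '' Y) :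
    RTilde Y α β :=
  fun _ hηY _ => iff_of_false (fun h => hα (range_subset_image_of_comp_eq_self hηY h))
    (fun h => hβ (range_subset_image_of_comp_eq_self hηY h))

theorem of_apply_eq_iff (h : ∀ x y, α x = α y ↔ β x = β y) : RTilde Y α β :=
  fun η _ _ => by simp only [funext_iff, comp_apply, h]

theorem range_subset_image (h : RTilde Y α β) (hα : range α ⊆ α '' Y) : range β ⊆ β '' Y := by
  obtain ⟨η, hηY, hηη, hαη, -⟩ := exists_idempotent_comp_eq_self_of_range_subset_image hα
  exact range_subset_image_of_comp_eq_self hηY ((h η hηY hηη).1 hαη)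

theorem apply_eq_of_apply_eq (h : RTilde Y α β) (hα : range α ⊆ α '' Y) {x y : X}
    (hxy : α x = α y) : β x = β y := by
  obtain ⟨η, hηY, hηη, hαη, hker⟩ := exists_idempotent_comp_eq_self_of_range_subset_image hα
  have hβη := (h η hηY hηη).1 hαη
  calc β x = β (η x) := (congrFun hβη x).symm
    _ = β (η y) := by rw [hker x y hxy]
    _ = β y := congrFun hβη y

theorem apply_eq_iff_of_pair (h : RTilde {a, b} α β) (hα : range α ⊆ {a, b})
    (hβ : range β ⊆ {a, b}) {u v : X} (hu : u ∈ ({a, b} : Set X)) (hv : v ∈ ({a, b} : Set X)) :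
    α u = α v ↔ β u = β v := by
  by_cases hαY : range α ⊆ α '' {a, b}
  · exact ⟨h.apply_eq_of_apply_eq hαY, h.symm.apply_eq_of_apply_eq (h.range_subset_image hαY)⟩
  · have hβY : ¬ range β ⊆ β '' {a, b} := fun hβY => hαY (h.symm.range_subset_image hβY)
    have hαab := apply_eq_of_not_range_subset_image_pair hα hαY
    have hβab := apply_eq_of_not_range_subset_image_pair hβ hβY
    rcases hu with rfl | rfl <;> rcases hv with rfl | rfl <;> simp [hαab, hβab]

theorem comp_of_pair {γ : X → X} (h : RTilde {a, b} α β) (hα : range α ⊆ {a, b})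
    (hβ : range β ⊆ {a, b}) (hγ : range γ ⊆ {a, b}) : RTilde {a, b} (α ∘ γ) (β ∘ γ) :=
  of_apply_eq_iff fun x y => h.apply_eq_iff_of_pair hα hβ (hγ ⟨x, rfl⟩) (hγ ⟨y, rfl⟩)

end RTilde

theorem exists_rTilde_not_rTilde_comp {Y : Set X} {a b c d : X} (ha : a ∈ Y) (hb : b ∈ Y)
    (hc : c ∈ Y) (hab : a ≠ b) (hca : c ≠ a) (hcb : c ≠ b) (hd : d ∉ Y) :
    ∃ α β γ : X → X, range α ⊆ Y ∧ range β ⊆ Y ∧ range γ ⊆ Y ∧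
      RTilde Y α β ∧ ¬ RTilde Y (α ∘ γ) (β ∘ γ) := by
  classical
  let α : X → X := fun x => if x ∈ Y then (if x = a then a else b) else c
  let β : X → X := fun x => if x ∈ Y then a else c
  let γ : X → X := fun x => if x ∈ Y then x else a
  have hγ (x : X) : γ x ∈ Y := by
    by_cases hx : x ∈ Y <;> simp [γ, hx, ha]
  refine ⟨α, β, γ, ?_, ?_, ?_, RTilde.of_not_range_subset_image ?_ ?_, fun h => ?_⟩
  · rintro _ ⟨x, rfl⟩
    simp only [α]
    split_ifs <;> assumption
  · rintro _ ⟨x, rfl⟩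
    simp only [β]
    split_ifs <;> assumption
  · rintro _ ⟨x, rfl⟩
    exact hγ x
  · intro hαY
    obtain ⟨y, hy, hyd⟩ := hαY ⟨d, rfl⟩
    simp only [α, hy, hd, if_true, if_false] at hyd
    split_ifs at hyd
    exacts [hca hyd.symm, hcb hyd.symm]
  · intro hβY
    obtain ⟨y, hy, hyd⟩ := hβY ⟨d, rfl⟩
    simp only [β, hy, hd, if_true, if_false] at hyd
    exact hca hyd.symm
  · have hβγ (x : X) : β (γ x) = a := by simp [β, hγ x]
    have hβγY : range (β ∘ γ) ⊆ (β ∘ γ) '' Y := by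
      rintro _ ⟨x, rfl⟩
      exact ⟨a, ha, by simp only [comp_apply, hβγ]⟩
    have hαγab := h.symm.apply_eq_of_apply_eq hβγY (x := a) (y := b)
      (by simp only [comp_apply, hβγ])
    exact hab (by simpa [α, γ, ha, hb, hab.symm] using hαγab)

end

/-- Let `X` be a set and `Y` a proper subset of `X` with at least two
elements (multiplication on `T(X,Y)` is `α·β := β ∘ α`, so `γ·α = α ∘ γ` and
`η·α = α ∘ η`). The relation `𝓡̃` on `T(X,Y)` is a left congruence if and only if `Y`
has exactly two elements. -/
theorem Rtilde_left_congruence_iff {X : Type*} (Y : Set X) (hY : Y.Nontrivial)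
    (hYX : Y ≠ Set.univ) :
    (∀ α β γ : X → X, Set.range α ⊆ Y → Set.range β ⊆ Y → Set.range γ ⊆ Y →
      (∀ η : X → X, Set.range η ⊆ Y → η ∘ η = η →
        ((α ∘ η = α) ↔ (β ∘ η = β))) →
      (∀ η : X → X, Set.range η ⊆ Y → η ∘ η = η →
        (((α ∘ γ) ∘ η = α ∘ γ) ↔ ((β ∘ γ) ∘ η = β ∘ γ)))) ↔
    ∃ a b : X, a ≠ b ∧ Y = {a, b} := by
  constructor
  · intro hcongr
    obtain ⟨a, ha, b, hb, hab⟩ := hY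
    obtain ⟨d, hd⟩ := (ne_univ_iff_exists_notMem Y).mp hYX
    refine ⟨a, b, hab, Subset.antisymm (fun c hc => ?_) (pair_subset ha hb)⟩
    by_contra hcab
    simp only [mem_insert_iff, mem_singleton_iff, not_or] at hcab
    obtain ⟨α, β, γ, hα, hβ, hγ, hαβ, hαβγ⟩ :=
      exists_rTilde_not_rTilde_comp ha hb hc hab hcab.1 hcab.2 hd
    exact hαβγ (hcongr α β γ hα hβ hγ hαβ)
  · rintro ⟨a, b, -, rfl⟩ α β γ hα hβ hγ hαβ
    exact RTilde.comp_of_pair hαβ hα hβ hγ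
end

section
/- Let X be a set and Y a proper subset of X with at least two elements, and let Q = {α ∈ T(X,Y) : α(X) ⊆ α(Y)}. For α, β ∈ T(X,Y), there exists γ ∈ T(X,Y) with α 𝓛* γ and γ 𝓡* β if and only if one of the following holds: (1) β ∈ Q and |α(X)| = |β(X)|; (2) β ∉ Q, |β(Y)| = |α(X)|, and |β(Y)| is infinite; (3) β ∉ Q and |β(Y)| < |α(X)| ≤ |β(Y)| + |X \ Y| (cardinal arithmetic). -/
/-- Membership in `T(X,Y)¹ = T(X,Y) ∪ {id}`. -/
def inT1 {X : Type*} (Y : Set X) (γ : X → X) : Prop :=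
  Set.range γ ⊆ Y ∨ γ = id

/-- The relation `𝓛*` on `T(X,Y)` (multiplication `α·β := β ∘ α`, so `α·γ = γ ∘ α`). -/
def Lstar {X : Type*} (Y : Set X) (α β : X → X) : Prop :=
  ∀ γ δ : X → X, inT1 Y γ → inT1 Y δ → ((γ ∘ α = δ ∘ α) ↔ (γ ∘ β = δ ∘ β))

/-- The relation `𝓡*` on `T(X,Y)` (`γ·α = α ∘ γ`). -/
def Rstar {X : Type*} (Y : Set X) (α β : X → X) : Prop :=
  ∀ γ δ : X → X, inT1 Y γ → inT1 Y δ → ((α ∘ γ = α ∘ δ) ↔ (β ∘ γ = β ∘ δ))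

/-!
`Lstar` is equality of ranges (the test maps are a constant and a two-valued map, which needs
`|Y| ≥ 2`). `Rstar Y γ β` forces `γ` and `β` to have the same kernel on `Y`, to lie in `Q`
together, and, when they lie in `Q`, to have the same kernel on all of `X`; conversely, equal
kernels, or equal kernels on `Y` with both maps outside `Q`, give `Rstar`. So a witness `γ` must
have `γ(X) = α(X)`; for `β ∉ Q`, `γ(Y)` is a proper subset of `α(X)` of size `|β(Y)|` whose
complement in `α(X)` is covered by `γ(X \ Y)`, and such a subset exists exactly in cases (2)
and (3).
-/

open Set Cardinal

theorem mk_range_eq_of_apply_eq_iff {W Z : Type*} {f g : W → Z}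
    (h : ∀ a b, f a = f b ↔ g a = g b) : #(range f) = #(range g) :=
  mk_congr <| (Setoid.quotientKerEquivRange f).symm.trans <|
    (Quotient.congrRight h).trans (Setoid.quotientKerEquivRange g)

theorem exists_range_eq_apply_eq_iff {W Z : Type*} {A : Set Z} (g : W → Z)
    (h : #A = #(range g)) : ∃ f : W → Z, range f = A ∧ ∀ a b, f a = f b ↔ g a = g b := by
  obtain ⟨e⟩ := Cardinal.eq.1 h
  refine ⟨Subtype.val ∘ e.symm ∘ rangeFactorization g, ?_, fun a b => ?_⟩
  · rw [(e.symm.surjective.comp rangeFactorization_surjective).range_comp, Subtype.range_coe]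
  · simp only [Function.comp_apply, Subtype.val_inj, e.symm.apply_eq_iff_eq, Subtype.ext_iff,
      rangeFactorization_coe]

theorem exists_ssubset_mk_eq_mk_sdiff_le_iff {Z : Type*} {A : Set Z} {κ μ : Cardinal}
    (hμ : 1 ≤ μ) :
    (∃ B ⊂ A, #B = κ ∧ #(A \ B : Set Z) ≤ μ) ↔
      (κ = #A ∧ ℵ₀ ≤ κ) ∨ (κ < #A ∧ #A ≤ κ + μ) := by
  constructor
  · rintro ⟨B, hBA, rfl, hle⟩
    rcases (mk_le_mk_of_subset hBA.subset).lt_or_eq with hlt | heq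
    · refine Or.inr ⟨hlt, ?_⟩
      rw [← mk_sdiff_add_mk hBA.subset, add_comm]
      gcongr
    · refine Or.inl ⟨heq, ?_⟩
      by_contra hfin
      rw [not_le, lt_aleph0_iff_set_finite] at hfin
      have hA : A.Finite := lt_aleph0_iff_set_finite.1 (heq ▸ hfin.lt_aleph0)
      exact (mk_strictMonoOn hfin hA hBA).ne heq
  · rintro (⟨rfl, hinf⟩ | ⟨hlt, hle⟩)
    · obtain ⟨a, ha⟩ : A.Nonempty :=
        nonempty_coe_sort.1 (mk_ne_zero_iff.1 (aleph0_pos.trans_le hinf).ne')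
      have ha' : {a} ⊆ A := singleton_subset_iff.2 ha
      have hsum : #(A \ {a} : Set Z) + 1 = #A := by
        rw [← mk_sdiff_add_mk ha', mk_singleton]
      have hinf' : ℵ₀ ≤ #(A \ {a} : Set Z) := by
        by_contra h
        exact (add_lt_aleph0 (not_le.1 h) one_lt_aleph0).not_ge (hsum ▸ hinf)
      refine ⟨A \ {a}, sdiff_singleton_ssubset.2 ha, ?_, ?_⟩
      · rw [← hsum, add_one_eq hinf']
      · rwa [sdiff_sdiff_cancel_left ha', mk_singleton]
    · obtain ⟨B, hBA, rfl⟩ := le_mk_iff_exists_subset.1 hlt.le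
      refine ⟨B, hBA.ssubset_of_ne (by rintro rfl; exact hlt.false), rfl, ?_⟩
      rcases lt_or_ge #B ℵ₀ with hfin | hinf
      · rw [← add_le_add_iff_of_lt_aleph0 hfin, mk_sdiff_add_mk hBA, add_comm]
        exact hle
      · rw [add_eq_max hinf] at hle
        exact (mk_le_mk_of_subset sdiff_subset).trans ((le_max_iff.1 hle).resolve_left hlt.not_ge)

section

variable {X : Type*} {Y : Set X} {α β γ : X → X}

theorem Lstar.range_subset (hY : Y.Nontrivial) (h : Lstar Y α γ) : range α ⊆ range γ := by
  classical
  rintro _ ⟨x, rfl⟩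
  by_contra hx
  obtain ⟨a, ha, b, hb, hab⟩ := hY
  have key := (h (fun _ => a) (fun z => if z = α x then b else a)
    (Or.inl (range_subset_iff.2 fun _ => ha))
    (Or.inl (range_subset_iff.2 fun _ => by split_ifs <;> assumption))).2
    (funext fun z => (if_neg fun hz => hx ⟨z, hz⟩).symm)
  exact hab (by simpa using congrFun key x)

theorem lstar_iff_range_eq (hY : Y.Nontrivial) : Lstar Y α γ ↔ range α = range γ :=
  ⟨fun h => (h.range_subset hY).antisymm (Lstar.range_subset hY fun u v hu hv =>
    (h u v hu hv).symm), fun h _ _ _ _ => by rw [← eqOn_range, ← eqOn_range, h]⟩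

theorem Rstar.symm (h : Rstar Y γ β) : Rstar Y β γ :=
  fun u v hu hv => (h u v hu hv).symm

theorem Rstar.apply_eq_apply_iff_of_mem (h : Rstar Y γ β) {y₁ y₂ : X} (h₁ : y₁ ∈ Y)
    (h₂ : y₂ ∈ Y) : γ y₁ = γ y₂ ↔ β y₁ = β y₂ := by
  have : Nonempty X := ⟨y₁⟩
  simpa [funext_iff] using h (fun _ => y₁) (fun _ => y₂)
    (Or.inl (range_subset_iff.2 fun _ => h₁)) (Or.inl (range_subset_iff.2 fun _ => h₂))

theorem Rstar.mk_image_eq (h : Rstar Y γ β) : #(γ '' Y) = #(β '' Y) := by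
  rw [← range_domRestrict, ← range_domRestrict]
  exact mk_range_eq_of_apply_eq_iff fun a b => h.apply_eq_apply_iff_of_mem a.2 b.2

/-- `u` picks in each fibre of `β ∈ Q` a point of `Y`; apply `Rstar` to the pair `u`, `id`. -/
theorem Rstar.exists_comp_eq (h : Rstar Y γ β) (hβ : range β ⊆ β '' Y) :
    ∃ u : X → X, range u ⊆ Y ∧ β ∘ u = β ∧ γ ∘ u = γ := by
  choose u hu hβu using fun x => hβ (mem_range_self x)
  have hβu' : β ∘ u = β := funext hβu
  exact ⟨u, range_subset_iff.2 hu, hβu',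
    (h u id (Or.inl (range_subset_iff.2 hu)) (Or.inr rfl)).2 hβu'⟩

theorem Rstar.range_subset_image (h : Rstar Y γ β) (hβ : range β ⊆ β '' Y) :
    range γ ⊆ γ '' Y := by
  obtain ⟨u, hu, -, hγu⟩ := h.exists_comp_eq hβ
  rintro _ ⟨x, rfl⟩
  exact ⟨u x, hu (mem_range_self x), congrFun hγu x⟩

theorem Rstar.apply_eq_apply_iff (h : Rstar Y γ β) (hβ : range β ⊆ β '' Y) (x₁ x₂ : X) :
    γ x₁ = γ x₂ ↔ β x₁ = β x₂ := by
  obtain ⟨u, hu, hβu, hγu⟩ := h.exists_comp_eq hβ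
  rw [← congrFun hγu x₁, ← congrFun hγu x₂, ← congrFun hβu x₁, ← congrFun hβu x₂]
  exact h.apply_eq_apply_iff_of_mem (hu (mem_range_self _)) (hu (mem_range_self _))

theorem rstar_of_apply_eq_iff (h : ∀ x₁ x₂, γ x₁ = γ x₂ ↔ β x₁ = β x₂) : Rstar Y γ β :=
  fun _ _ _ _ => by simp only [funext_iff, Function.comp_apply, h]

theorem comp_ne_of_not_range_subset_image {u : X → X} (hu : range u ⊆ Y)
    (hγ : ¬ range γ ⊆ γ '' Y) : γ ∘ u ≠ γ := fun h =>
  hγ (range_subset_iff.2 fun x => ⟨u x, hu (mem_range_self x), congrFun h x⟩)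

theorem rstar_of_not_range_subset_image
    (h : ∀ ⦃y₁⦄, y₁ ∈ Y → ∀ ⦃y₂⦄, y₂ ∈ Y → (γ y₁ = γ y₂ ↔ β y₁ = β y₂))
    (hγ : ¬ range γ ⊆ γ '' Y) (hβ : ¬ range β ⊆ β '' Y) : Rstar Y γ β := by
  rintro u v (hu | rfl) (hv | rfl)
  · simp only [funext_iff, Function.comp_apply]
    exact forall_congr' fun x => h (hu (mem_range_self x)) (hv (mem_range_self x))
  · exact iff_of_false (comp_ne_of_not_range_subset_image hu hγ)
      (comp_ne_of_not_range_subset_image hu hβ)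
  · exact iff_of_false (comp_ne_of_not_range_subset_image hv hγ).symm
      (comp_ne_of_not_range_subset_image hv hβ).symm
  · exact iff_of_true rfl rfl

theorem mk_range_sdiff_image_le (γ : X → X) :
    #(range γ \ γ '' Y : Set X) ≤ #(Set.univ \ Y : Set X) :=
  (mk_le_mk_of_subset (range_sdiff_image_subset γ Y)).trans (compl_eq_univ_sdiff Y ▸ mk_image_le)

theorem exists_range_eq_not_range_subset_image {A B : Set X} (β : X → X) (hBA : B ⊂ A)
    (hB : #B = #(β '' Y)) (hAB : #(A \ B : Set X) ≤ #(Set.univ \ Y : Set X)) :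
    ∃ γ : X → X, range γ = A ∧
      (∀ ⦃y₁⦄, y₁ ∈ Y → ∀ ⦃y₂⦄, y₂ ∈ Y → (γ y₁ = γ y₂ ↔ β y₁ = β y₂)) ∧
      ¬ range γ ⊆ γ '' Y := by
  classical
  obtain ⟨e⟩ := Cardinal.eq.1 hB.symm
  obtain ⟨c, hc⟩ := nonempty_of_ssubset hBA
  obtain ⟨g, hg⟩ : ∃ g : ↥(Set.univ \ Y) → ↥(A \ B), Function.Surjective g :=
    Function.exists_surjective_iff.2 ⟨⟨fun _ => ⟨c, hc⟩⟩, (Cardinal.le_def _ _).1 hAB⟩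
  set γ : X → X := fun x =>
    if hx : x ∈ Y then e ⟨β x, mem_image_of_mem β hx⟩ else g ⟨x, mem_univ x, hx⟩ with hγ
  have hrange : range γ = A := by
    ext p
    constructor
    · rintro ⟨x, rfl⟩
      by_cases hx : x ∈ Y
      · simpa [hγ, hx] using hBA.subset (e _).2
      · simpa [hγ, hx] using (g _).2.1
    · intro hp
      by_cases hpB : p ∈ B
      · obtain ⟨⟨_, y, hy, rfl⟩, hq⟩ := e.surjective ⟨p, hpB⟩
        exact ⟨y, by simp [hγ, hy, hq]⟩
      · obtain ⟨⟨x, _, hx⟩, hq⟩ := hg ⟨p, hp, hpB⟩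
        exact ⟨x, by simp [hγ, hx, hq]⟩
  refine ⟨γ, hrange, fun y₁ hy₁ y₂ hy₂ => ?_, fun hsub => ?_⟩
  · simp only [hγ, dif_pos hy₁, dif_pos hy₂, Subtype.val_inj, e.apply_eq_iff_eq, Subtype.mk.injEq]
  · obtain ⟨y, hy, rfl⟩ := hsub (hrange ▸ hc.1)
    refine hc.2 ?_
    simp only [hγ, dif_pos hy]
    exact (e _).2

end

theorem LstarRstar_in_TXY_general {X : Type*} (Y : Set X) (hY : Y.Nontrivial)
    (hYX : Y ≠ Set.univ) (α β : X → X)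
    (hα : Set.range α ⊆ Y) :
    (∃ γ : X → X, Set.range γ ⊆ Y ∧ Lstar Y α γ ∧ Rstar Y γ β) ↔
    ((Set.range β ⊆ β '' Y ∧
        Cardinal.mk (Set.range α) = Cardinal.mk (Set.range β)) ∨
      (¬ Set.range β ⊆ β '' Y ∧
        Cardinal.mk (β '' Y) = Cardinal.mk (Set.range α) ∧
        Cardinal.aleph0 ≤ Cardinal.mk (β '' Y)) ∨
      (¬ Set.range β ⊆ β '' Y ∧
        Cardinal.mk (β '' Y) < Cardinal.mk (Set.range α) ∧
        Cardinal.mk (Set.range α) ≤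
          Cardinal.mk (β '' Y) + Cardinal.mk ↥(Set.univ \ Y))) := by
  have hμ : 1 ≤ #(Set.univ \ Y : Set X) := by
    obtain ⟨x, hx⟩ := (ne_univ_iff_exists_notMem Y).1 hYX
    exact Cardinal.one_le_iff_ne_zero.2 (mk_ne_zero_iff.2 ⟨⟨x, mem_univ x, hx⟩⟩)
  constructor
  · rintro ⟨γ, -, hL, hR⟩
    rw [lstar_iff_range_eq hY] at hL
    by_cases hQ : range β ⊆ β '' Y
    · exact Or.inl ⟨hQ, hL ▸ mk_range_eq_of_apply_eq_iff (hR.apply_eq_apply_iff hQ)⟩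
    have hγQ : ¬ range γ ⊆ γ '' Y := fun h => hQ (hR.symm.range_subset_image h)
    refine Or.inr (and_or_left.1 ⟨hQ, (exists_ssubset_mk_eq_mk_sdiff_le_iff hμ).1 ?_⟩)
    rw [hL]
    exact ⟨γ '' Y, (image_subset_range γ Y).ssubset_of_not_subset hγQ, hR.mk_image_eq,
      mk_range_sdiff_image_le γ⟩
  · rintro (⟨-, hcard⟩ | hsplit)
    · obtain ⟨γ, hγ, hker⟩ := exists_range_eq_apply_eq_iff β hcard
      exact ⟨γ, hγ ▸ hα, (lstar_iff_range_eq hY).2 hγ.symm, rstar_of_apply_eq_iff hker⟩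
    obtain ⟨hQ, hsplit⟩ := and_or_left.2 hsplit
    obtain ⟨B, hBA, hB, hAB⟩ := (exists_ssubset_mk_eq_mk_sdiff_le_iff hμ).2 hsplit
    obtain ⟨γ, hγ, hker, hγQ⟩ := exists_range_eq_not_range_subset_image β hBA hB hAB
    exact ⟨γ, hγ ▸ hα, (lstar_iff_range_eq hY).2 hγ.symm,
      rstar_of_not_range_subset_image hker hγQ hQ⟩

/-- Let `X` be a set, `Y` a proper subset of `X` with at least two
elements, and `Q = {α ∈ T(X,Y) : α(X) ⊆ α(Y)}`. For `α, β ∈ T(X,Y)`: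
`α (𝓛* ∘ 𝓡*) β` iff (1) `β ∈ Q` and `|α(X)| = |β(X)|`; or (2) `β ∉ Q`,
`|β(Y)| = |α(X)|` and `|β(Y)|` is infinite; or (3) `β ∉ Q` and
`|β(Y)| < |α(X)| ≤ |β(Y)| + |X \ Y|`. -/
theorem LstarRstar_in_TXY {X : Type*} (Y : Set X) (hY : Y.Nontrivial)
    (hYX : Y ≠ Set.univ) (α β : X → X)
    (hα : Set.range α ⊆ Y) (hβ : Set.range β ⊆ Y) :
    (∃ γ : X → X, Set.range γ ⊆ Y ∧ Lstar Y α γ ∧ Rstar Y γ β) ↔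
    ((Set.range β ⊆ β '' Y ∧
        Cardinal.mk (Set.range α) = Cardinal.mk (Set.range β)) ∨
      (¬ Set.range β ⊆ β '' Y ∧
        Cardinal.mk (β '' Y) = Cardinal.mk (Set.range α) ∧
        Cardinal.aleph0 ≤ Cardinal.mk (β '' Y)) ∨
      (¬ Set.range β ⊆ β '' Y ∧
        Cardinal.mk (β '' Y) < Cardinal.mk (Set.range α) ∧
        Cardinal.mk (Set.range α) ≤
          Cardinal.mk (β '' Y) + Cardinal.mk ↥(Set.univ \ Y))) :=
  LstarRstar_in_TXY_general Y hY hYX α β hα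
end

section
/- Let X be a set and Y a proper subset of X with at least two elements. Let 𝓓* denote the smallest equivalence relation on T(X,Y) containing both 𝓛* and 𝓡* (their join). For α, β ∈ T(X,Y), α 𝓓* β if and only if one of the following holds: (I) |X \ Y| = 1 and |α(X)| = |β(X)|; (II) 2 ≤ |X \ Y| < ℵ₀ and (either both 1 < |α(X)| < ℵ₀ and 1 < |β(X)| < ℵ₀, or |α(X)| = |β(X)|); (III) |X \ Y| is infinite and (either both 1 < |α(X)| ≤ |X \ Y| and 1 < |β(X)| ≤ |X \ Y|, or |α(X)| = |β(X)|). -/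
/-- The relation `𝓛*` on `T(X,Y)`, with membership in `T(X,Y)` built in
(multiplication `α·β := β ∘ α`, so `α·γ = γ ∘ α`). -/
def LstarT {X : Type*} (Y : Set X) (α β : X → X) : Prop :=
  Set.range α ⊆ Y ∧ Set.range β ⊆ Y ∧
    ∀ γ δ : X → X, inT1 Y γ → inT1 Y δ → ((γ ∘ α = δ ∘ α) ↔ (γ ∘ β = δ ∘ β))

/-- The relation `𝓡*` on `T(X,Y)`, with membership in `T(X,Y)` built in
(`γ·α = α ∘ γ`). -/
def RstarT {X : Type*} (Y : Set X) (α β : X → X) : Prop :=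
  Set.range α ⊆ Y ∧ Set.range β ⊆ Y ∧
    ∀ γ δ : X → X, inT1 Y γ → inT1 Y δ → ((α ∘ γ = α ∘ δ) ↔ (β ∘ γ = β ∘ δ))

open Cardinal Set Function

section RankRelation

variable {m r r' k k' : Cardinal}

/-- The ranks that are `𝓓*`-related to ranks other than themselves, for `m = |X \ Y|`. -/
def rankBand (m r : Cardinal) : Prop :=
  (2 ≤ m ∧ m < ℵ₀ ∧ 1 < r ∧ r < ℵ₀) ∨ (ℵ₀ ≤ m ∧ 1 < r ∧ r ≤ m)

def rankRel (m r r' : Cardinal) : Prop :=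
  r = r' ∨ rankBand m r ∧ rankBand m r'

lemma rankRel_equivalence (m : Cardinal) : Equivalence (rankRel m) where
  refl _ := Or.inl rfl
  symm h := h.imp Eq.symm And.symm
  trans := by
    rintro r r' r'' (rfl | ⟨hr, hr'⟩) (rfl | ⟨hs, hs'⟩)
    exacts [Or.inl rfl, Or.inr ⟨hs, hs'⟩, Or.inr ⟨hr, hr'⟩, Or.inr ⟨hr, hs'⟩]

lemma rankBand_add (h2 : 2 ≤ m) (hr : 1 ≤ r) (hk : 1 ≤ k) (hkm : k ≤ m)
    (hrm : r < ℵ₀ ∨ r ≤ m) : rankBand m (r + k) := by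
  have h1 : 1 < r + k :=
    Cardinal.one_lt_two.trans_le (one_add_one_eq_two (R := Cardinal) ▸ add_le_add hr hk)
  rcases lt_or_ge m ℵ₀ with hm | hm
  · exact Or.inl ⟨h2, hm, h1, add_lt_aleph0 (hrm.elim id (·.trans_lt hm)) (hkm.trans_lt hm)⟩
  · exact Or.inr ⟨hm, h1, add_le_of_le hm (hrm.elim (·.le.trans hm) id) hkm⟩

lemma rankRel_add (hr : 1 ≤ r) (hk : 1 ≤ k) (hk' : 1 ≤ k') (hkm : k ≤ m) (hk'm : k' ≤ m) :
    rankRel m (r + k) (r + k') := by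
  by_cases hrinf : ℵ₀ ≤ r ∧ m ≤ r
  · exact Or.inl <| by
      rw [add_eq_left hrinf.1 (hkm.trans hrinf.2), add_eq_left hrinf.1 (hk'm.trans hrinf.2)]
  by_cases h2 : 2 ≤ m
  · have hrm : r < ℵ₀ ∨ r ≤ m := by
      rcases lt_or_ge r ℵ₀ with hr₀ | hr₀
      exacts [Or.inl hr₀, Or.inr (le_of_not_ge fun hmr => hrinf ⟨hr₀, hmr⟩)]
    exact Or.inr ⟨rankBand_add h2 hr hk hkm hrm, rankBand_add h2 hr hk' hk'm hrm⟩
  · have hle1 : ∀ {c}, c ≤ m → c ≤ 1 := fun hc =>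
      le_of_not_gt fun h1 => h2 ((two_le_iff_one_lt.2 h1).trans hc)
    exact Or.inl <| by rw [(hle1 hkm).antisymm hk, (hle1 hk'm).antisymm hk']

lemma rankRel_iff (hm : 1 ≤ m) :
    rankRel m r r' ↔
      (m = 1 ∧ r = r') ∨
      (2 ≤ m ∧ m < ℵ₀ ∧ ((1 < r ∧ r < ℵ₀ ∧ 1 < r' ∧ r' < ℵ₀) ∨ r = r')) ∨
      (ℵ₀ ≤ m ∧ ((1 < r ∧ r ≤ m ∧ 1 < r' ∧ r' ≤ m) ∨ r = r')) := by
  rcases hm.eq_or_lt with rfl | h1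
  · have : ¬ rankBand 1 r := by
      rintro (⟨h2, -⟩ | ⟨h₀, -⟩)
      exacts [Cardinal.one_lt_two.not_ge h2, one_lt_aleph0.not_ge h₀]
    simp [rankRel, this, Cardinal.one_lt_two.not_ge, one_lt_aleph0.not_ge]
  · have h2 := two_le_iff_one_lt.2 h1
    rcases lt_or_ge m ℵ₀ with hfin | hinf
    · simp only [rankRel, rankBand, h2, hfin, true_and, hfin.not_ge, false_and, or_false, h1.ne',
        false_or]
      tauto
    · simp only [rankRel, rankBand, h2, hinf.not_gt, false_and, and_false, hinf, true_and,
        false_or, h1.ne']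
      tauto

end RankRelation

section

variable {X : Type*} {Y : Set X} {α β : X → X}

abbrev DstarT (Y : Set X) : (X → X) → (X → X) → Prop :=
  Relation.EqvGen fun a b => LstarT Y a b ∨ RstarT Y a b

def defect (Y : Set X) (α : X → X) : Set X :=
  range α \ α '' Y

lemma inT1_const {u : X} (hu : u ∈ Y) : inT1 Y fun _ => u :=
  Or.inl (range_const_subset.trans (singleton_subset_iff.2 hu))

lemma lstarT_of_range_eq (hα : range α ⊆ Y) (hβ : range β ⊆ Y) (h : range α = range β) :
    LstarT Y α β :=
  ⟨hα, hβ, fun γ δ _ _ => by rw [← eqOn_range, ← eqOn_range, h]⟩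

lemma range_subset_of_lstarT (hY : Y.Nontrivial) (h : LstarT Y α β) :
    range α ⊆ range β := by
  classical
  obtain ⟨u, hu, v, hv, huv⟩ := hY
  rintro _ ⟨x, rfl⟩
  by_contra hx
  set δ : X → X := fun t => if t = α x then v else u
  have hδ : inT1 Y δ := Or.inl <| by
    rintro _ ⟨t, rfl⟩
    by_cases ht : t = α x <;> simp [δ, ht, hu, hv]
  have hβδ : EqOn (fun _ => u) δ (range β) := fun t ht =>
    (if_neg (ne_of_mem_of_not_mem ht hx)).symm
  have hαδ := congrFun ((h.2.2 _ _ (inT1_const hu) hδ).2 (eqOn_range.1 hβδ)) x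
  exact huv (by simpa [δ] using hαδ)

lemma range_eq_of_lstarT (hY : Y.Nontrivial) (h : LstarT Y α β) : range α = range β :=
  (range_subset_of_lstarT hY h).antisymm
    (range_subset_of_lstarT hY ⟨h.2.1, h.1, fun γ δ hγ hδ => (h.2.2 γ δ hγ hδ).symm⟩)

lemma rstarT_of_apply_eq_iff (hα : range α ⊆ Y) (hβ : range β ⊆ Y)
    (h : ∀ x x', α x = α x' ↔ β x = β x') : RstarT Y α β :=
  ⟨hα, hβ, fun γ δ _ _ => by simp only [funext_iff, comp_apply, h]⟩

lemma comp_ne_self_of_apply_notMem_image {γ : X → X} (hγ : range γ ⊆ Y) {a : X}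
    (ha : α a ∉ α '' Y) : α ∘ γ ≠ α :=
  fun h => ha ⟨γ a, hγ (mem_range_self a), congrFun h a⟩

lemma rstarT_of_eqOn_of_apply_notMem_image (hα : range α ⊆ Y) (hβ : range β ⊆ Y)
    (h : EqOn α β Y) {a b : X} (ha : α a ∉ α '' Y) (hb : β b ∉ β '' Y) : RstarT Y α β := by
  refine ⟨hα, hβ, fun γ δ hγ hδ => ?_⟩
  rcases hγ with hγ | rfl <;> rcases hδ with hδ | rfl
  · have hcomp : ∀ ε : X → X, range ε ⊆ Y → α ∘ ε = β ∘ ε := fun ε hε =>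
      funext fun x => h (hε (mem_range_self x))
    rw [hcomp γ hγ, hcomp δ hδ]
  · exact iff_of_false (comp_ne_self_of_apply_notMem_image hγ ha)
      (comp_ne_self_of_apply_notMem_image hγ hb)
  · exact iff_of_false (comp_ne_self_of_apply_notMem_image hδ ha).symm
      (comp_ne_self_of_apply_notMem_image hδ hb).symm
  · exact iff_of_true rfl rfl

lemma RstarT.symm (h : RstarT Y α β) : RstarT Y β α :=
  ⟨h.2.1, h.1, fun γ δ hγ hδ => (h.2.2 γ δ hγ hδ).symm⟩

lemma RstarT.apply_eq_iff (h : RstarT Y α β) {u v : X} (hu : u ∈ Y) (hv : v ∈ Y) :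
    α u = α v ↔ β u = β v := by
  have : Nonempty X := ⟨u⟩
  simpa [funext_iff] using h.2.2 _ _ (inT1_const hu) (inT1_const hv)

lemma RstarT.defect_nonempty (h : RstarT Y α β) (hα : (defect Y α).Nonempty) :
    (defect Y β).Nonempty := by
  obtain ⟨_, ⟨a, rfl⟩, ha⟩ := hα
  by_contra hβ
  have hβY : ∀ x, ∃ y ∈ Y, β y = β x := fun x => by
    by_contra hx
    exact hβ ⟨β x, mem_range_self x, fun ⟨y, hy, hyx⟩ => hx ⟨y, hy, hyx⟩⟩
  choose δ hδY hδ using hβY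
  have hαδ := (h.2.2 δ id (Or.inl (range_subset_iff.2 hδY)) (Or.inr rfl)).2 (funext hδ)
  exact comp_ne_self_of_apply_notMem_image (range_subset_iff.2 hδY) ha hαδ

lemma mk_range_eq_mk_image_add_mk_defect (Y : Set X) (α : X → X) :
    #(range α) = #(α '' Y) + #(defect Y α) := by
  rw [add_comm, defect, mk_sdiff_add_mk (image_subset_range α Y)]

lemma mk_defect_le (Y : Set X) (α : X → X) : #(defect Y α) ≤ #(univ \ Y : Set X) := by
  refine (mk_le_mk_of_subset (t := α '' (univ \ Y)) ?_).trans mk_image_le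
  rintro _ ⟨⟨x, rfl⟩, hx⟩
  exact ⟨x, ⟨mem_univ x, fun hxY => hx ⟨x, hxY, rfl⟩⟩, rfl⟩

lemma mk_image_eq_of_apply_eq_iff (h : ∀ u ∈ Y, ∀ v ∈ Y, α u = α v ↔ β u = β v) :
    #(α '' Y) = #(β '' Y) := by
  rw [image_eq_range, image_eq_range]
  exact mk_congr <| (Setoid.quotientKerEquivRange _).symm.trans <|
    (Quotient.congrRight fun u v : Y => h u u.2 v v.2).trans (Setoid.quotientKerEquivRange _)

lemma rankRel_of_rstarT (hY : Y.Nonempty) (h : RstarT Y α β) :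
    rankRel #(univ \ Y : Set X) #(range α) #(range β) := by
  rw [mk_range_eq_mk_image_add_mk_defect Y α, mk_range_eq_mk_image_add_mk_defect Y β,
    mk_image_eq_of_apply_eq_iff fun u hu v hv => h.apply_eq_iff hu hv]
  by_cases hα : (defect Y α).Nonempty
  · have one_le_mk {s : Set X} (hs : s.Nonempty) : 1 ≤ #s :=
      Cardinal.one_le_iff_ne_zero.2 (mk_ne_zero_iff.2 hs.to_subtype)
    exact rankRel_add (one_le_mk (hY.image β)) (one_le_mk hα)
      (one_le_mk (h.defect_nonempty hα)) (mk_defect_le Y α) (mk_defect_le Y β)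
  · have hβ : ¬ (defect Y β).Nonempty := fun hβ => hα (h.symm.defect_nonempty hβ)
    rw [not_nonempty_iff_eq_empty.1 hα, not_nonempty_iff_eq_empty.1 hβ]
    exact Or.inl rfl

lemma rankRel_of_dstarT (hY : Y.Nontrivial) (h : DstarT Y α β) :
    rankRel #(univ \ Y : Set X) #(range α) #(range β) := by
  refine ((rankRel_equivalence _).comap fun α : X → X => #(range α)).eqvGen_iff.1
    (Relation.EqvGen.mono ?_ _ _ h)
  rintro α β (hL | hR)
  · exact Or.inl (congrArg (fun s : Set X => #s) (range_eq_of_lstarT hY hL))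
  · exact rankRel_of_rstarT hY.nonempty hR

/-- Equal rank suffices: transport `β` along a bijection of the images to get a map with the
image of `α` (an `𝓛*`-step) and the kernel of `β` (an `𝓡*`-step). -/
lemma dstarT_of_mk_range_eq (hα : range α ⊆ Y) (hβ : range β ⊆ Y)
    (h : #(range α) = #(range β)) : DstarT Y α β := by
  obtain ⟨e⟩ := Cardinal.eq.1 h.symm
  set β' : X → X := Subtype.val ∘ e ∘ rangeFactorization β
  have hrange : range β' = range α := by
    rw [(e.surjective.comp rangeFactorization_surjective).range_comp, Subtype.range_coe]
  have hker : ∀ x x', β' x = β' x' ↔ β x = β x' := fun x x' => by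
    simp [β', Subtype.val_injective.eq_iff, rangeFactorization]
  exact .trans _ β' _ (.rel _ _ (Or.inl (lstarT_of_range_eq hα (hrange ▸ hα) hrange.symm)))
    (.rel _ _ (Or.inr (rstarT_of_apply_eq_iff (hrange ▸ hα) hβ hker)))

lemma exists_dstarT_mk_range_eq_add_one (hα : range α ⊆ Y) {C : Set X} (hC : C ⊆ range α)
    (hCne : C.Nonempty) (hD : (range α \ C).Nonempty)
    (hDm : #(range α \ C : Set X) ≤ #(univ \ Y : Set X)) :
    ∃ β, range β ⊆ Y ∧ #(range β) = #C + 1 ∧ DstarT Y α β := by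
  classical
  obtain ⟨j⟩ := (le_def _ _).1 hDm
  obtain ⟨c, hc⟩ := hCne
  obtain ⟨d, hd⟩ := hD
  set ι : (range α \ C : Set X) → X := fun s => (j s : X)
  have hι : Injective ι := Subtype.val_injective.comp j.injective
  have hYι : Y ⊆ (range ι)ᶜ := by
    rintro y hy ⟨s, rfl⟩
    exact (j s).2.2 hy
  set ρ : X → X := C.piecewise id fun _ => c
  have hρC : ρ '' (range ι)ᶜ = C := by
    refine subset_antisymm ?_ fun t ht => ⟨t, hYι (hα (hC ht)), piecewise_eq_of_mem _ _ _ ht⟩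
    rintro _ ⟨x, -, rfl⟩
    by_cases hx : x ∈ C <;> simp [ρ, hx, hc]
  -- `α₁` sends `ι s` to `s` and `Y` onto `C`, so it has the image of `α`; `β` agrees with `α₁`
  -- on `Y` but sends every `ι s` to `d`
  set α₁ : X → X := extend ι Subtype.val ρ
  set β : X → X := extend ι (fun _ => d) ρ
  have hα₁ : range α₁ = range α := by
    rw [range_extend hι, hρC, Subtype.range_coe, sdiff_union_of_subset hC]
  have hβ : range β = insert d C := by
    have : Nonempty (range α \ C : Set X) := ⟨⟨d, hd⟩⟩
    rw [range_extend hι, hρC, range_const, singleton_union]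
  have hα₁Y : EqOn α₁ ρ Y := fun y hy => extend_apply' _ _ _ (hYι hy)
  have hβY : EqOn β ρ Y := fun y hy => extend_apply' _ _ _ (hYι hy)
  have hd_out : ∀ {f : X → X}, EqOn f ρ Y → d ∉ f '' Y := by
    rintro f hf ⟨y, hy, rfl⟩
    exact hd.2 (hρC ▸ hf hy ▸ mem_image_of_mem ρ (hYι hy))
  have hβ_sub : range β ⊆ Y := hβ ▸ insert_subset (hα hd.1) (hC.trans hα)
  refine ⟨β, hβ_sub, by rw [hβ, mk_insert hd.2], .trans _ α₁ _ ?_ (.rel _ _ (Or.inr ?_))⟩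
  · exact .rel _ _ (Or.inl (lstarT_of_range_eq hα (hα₁ ▸ hα) hα₁.symm))
  · have hα₁d : α₁ (ι ⟨d, hd⟩) = d := hι.extend_apply _ _ _
    have hβd : β (ι ⟨d, hd⟩) = d := hι.extend_apply _ _ _
    exact rstarT_of_eqOn_of_apply_notMem_image (hα₁ ▸ hα) hβ_sub (hα₁Y.trans hβY.symm)
      (hα₁d ▸ hd_out hα₁Y) (hβd ▸ hd_out hβY)

lemma exists_dstarT_mk_range_eq_two_of_le (hα : range α ⊆ Y) (h1 : 1 < #(range α))
    (hm : #(range α) ≤ #(univ \ Y : Set X)) :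
    ∃ ω, range ω ⊆ Y ∧ #(range ω) = 2 ∧ DstarT Y α ω := by
  obtain ⟨⟨t, ht⟩, ⟨s, hs⟩, hts⟩ := two_le_iff.1 (two_le_iff_one_lt.2 h1)
  have hst : s ∈ range α \ {t} := ⟨hs, fun h => hts (Subtype.ext h.symm)⟩
  simpa [mk_singleton, one_add_one_eq_two] using
    exists_dstarT_mk_range_eq_add_one hα (singleton_subset_iff.2 ht) (singleton_nonempty t)
      ⟨s, hst⟩ ((mk_le_mk_of_subset sdiff_subset).trans hm)

/-- With two points outside `Y`, a rank `n + 3` map is joined to one of rank `n + 2` by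
collapsing two of its values. -/
lemma exists_dstarT_mk_range_eq_two_of_natCast (h2 : 2 ≤ #(univ \ Y : Set X)) (n : ℕ)
    (hα : range α ⊆ Y) (hn : #(range α) = n + 2) :
    ∃ ω, range ω ⊆ Y ∧ #(range ω) = 2 ∧ DstarT Y α ω := by
  induction n generalizing α with
  | zero => exact ⟨α, hα, by simpa using hn, .refl _⟩
  | succ n ih =>
    obtain ⟨⟨d, hd⟩, ⟨d', hd'⟩, hdd'⟩ := two_le_iff.1 (le_add_self.trans_eq hn.symm)
    have hD : ({d, d'} : Set X) ⊆ range α := insert_subset hd (singleton_subset_iff.2 hd')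
    have hD2 : #({d, d'} : Set X) = 2 := by
      rw [mk_insert (a := d) fun h => hdd' (Subtype.ext h), mk_singleton, one_add_one_eq_two]
    have hC : #(range α \ {d, d'} : Set X) = n + 1 := by
      have := mk_sdiff_add_mk hD
      rw [hD2, hn, Nat.cast_succ, ← Nat.cast_ofNat, add_nat_inj] at this
      exact this
    obtain ⟨β, hβ, hβn, hαβ⟩ := exists_dstarT_mk_range_eq_add_one hα sdiff_subset
      (mk_set_ne_zero_iff.1 (by rw [hC]; exact_mod_cast n.succ_ne_zero))
      (by rw [sdiff_sdiff_cancel_left hD]; exact insert_nonempty d {d'})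
      (by rw [sdiff_sdiff_cancel_left hD, hD2]; exact h2)
    obtain ⟨ω, hω, hω2, hβω⟩ := ih hβ (by rw [hβn, hC, add_assoc, one_add_one_eq_two])
    exact ⟨ω, hω, hω2, .trans _ _ _ hαβ hβω⟩

lemma exists_dstarT_mk_range_eq_two (hα : range α ⊆ Y)
    (h : rankBand #(univ \ Y : Set X) #(range α)) :
    ∃ ω, range ω ⊆ Y ∧ #(range ω) = 2 ∧ DstarT Y α ω := by
  rcases h with ⟨h2, -, h1, hfin⟩ | ⟨-, h1, hm⟩
  · obtain ⟨n, hn⟩ := lt_aleph0.1 hfin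
    obtain ⟨k, rfl⟩ : ∃ k, n = k + 2 := ⟨n - 2, by
      have : 1 < n := by exact_mod_cast hn ▸ h1
      omega⟩
    exact exists_dstarT_mk_range_eq_two_of_natCast h2 k hα (by rw [hn]; push_cast; rfl)
  · exact exists_dstarT_mk_range_eq_two_of_le hα h1 hm

lemma dstarT_iff_rankRel (hY : Y.Nontrivial) (hα : range α ⊆ Y) (hβ : range β ⊆ Y) :
    DstarT Y α β ↔ rankRel #(univ \ Y : Set X) #(range α) #(range β) := by
  refine ⟨rankRel_of_dstarT hY, ?_⟩
  rintro (h | ⟨hαm, hβm⟩)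
  · exact dstarT_of_mk_range_eq hα hβ h
  · obtain ⟨ω, hω, hω2, hαω⟩ := exists_dstarT_mk_range_eq_two hα hαm
    obtain ⟨ω', hω', hω'2, hβω'⟩ := exists_dstarT_mk_range_eq_two hβ hβm
    exact .trans _ _ _ hαω
      (.trans _ _ _ (dstarT_of_mk_range_eq hω hω' (hω2.trans hω'2.symm)) hβω'.symm)

end

/-- Let `X` be a set and `Y` a proper subset of `X` with at least two
elements, and let `𝓓*` be the join of `𝓛*` and `𝓡*` (the equivalence closure of their
union). For `α, β ∈ T(X,Y)`, `α 𝓓* β` iff: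
(I) `|X \ Y| = 1` and `|α(X)| = |β(X)|`; or
(II) `2 ≤ |X \ Y| < ℵ₀` and (both ranks lie strictly between `1` and `ℵ₀`, or
`|α(X)| = |β(X)|`); or
(III) `|X \ Y|` is infinite and (both ranks lie in `(1, |X \ Y|]`, or
`|α(X)| = |β(X)|`). -/
theorem Dstar_in_TXY {X : Type*} (Y : Set X) (hY : Y.Nontrivial)
    (hYX : Y ≠ Set.univ) (α β : X → X)
    (hα : Set.range α ⊆ Y) (hβ : Set.range β ⊆ Y) :
    Relation.EqvGen (fun a b => LstarT Y a b ∨ RstarT Y a b) α β ↔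
    ((Cardinal.mk ↥(Set.univ \ Y) = 1 ∧
        Cardinal.mk (Set.range α) = Cardinal.mk (Set.range β)) ∨
      (2 ≤ Cardinal.mk ↥(Set.univ \ Y) ∧
        Cardinal.mk ↥(Set.univ \ Y) < Cardinal.aleph0 ∧
        ((1 < Cardinal.mk (Set.range α) ∧
            Cardinal.mk (Set.range α) < Cardinal.aleph0 ∧
            1 < Cardinal.mk (Set.range β) ∧
            Cardinal.mk (Set.range β) < Cardinal.aleph0) ∨
          Cardinal.mk (Set.range α) = Cardinal.mk (Set.range β))) ∨
      (Cardinal.aleph0 ≤ Cardinal.mk ↥(Set.univ \ Y) ∧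
        ((1 < Cardinal.mk (Set.range α) ∧
            Cardinal.mk (Set.range α) ≤ Cardinal.mk ↥(Set.univ \ Y) ∧
            1 < Cardinal.mk (Set.range β) ∧
            Cardinal.mk (Set.range β) ≤ Cardinal.mk ↥(Set.univ \ Y)) ∨
          Cardinal.mk (Set.range α) = Cardinal.mk (Set.range β)))) := by
  have hm : 1 ≤ Cardinal.mk ↥(Set.univ \ Y) := by
    rw [Cardinal.one_le_iff_ne_zero, Cardinal.mk_ne_zero_iff, Set.nonempty_coe_sort,
      ← Set.compl_eq_univ_sdiff, Set.nonempty_compl]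
    exact hYX
  exact (dstarT_iff_rankRel hY hα hβ).trans (rankRel_iff hm)
end
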